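/- arXiv:2512.19063 — 4 statements merged into one kernel-verified Lean document; each statement's English description precedes it below -/
import Mathlib

section
/- Let $d_1,\dots,d_n$ be nonnegative square-integrable random variables (possibly dependent), and let $z_1,\dots,z_n$ be mutually independent random variables with $z_i$ equal in distribution to $d_i$ for each $i$. Then $\tfrac{1}{2}\,\mathbb{E}\big(\sum_{i=1}^n z_i\big)^2 \le \mathbb{E}\big(\sum_{i=1}^n d_i\big)^2$. -/
open MeasureTheory ProbabilityTheory

/-- Complete decoupling lower bound: for nonnegative square-integrable (possibly dependent)
random variables `d i` and mutually independent `z i` with `z i` equal in distribution to `d i`,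
`(1/2) * E (∑ z i)^2 ≤ E (∑ d i)^2`. -/
theorem complete_decoupling_lower_bound
    {Ω : Type*} [MeasurableSpace Ω] (μ : Measure Ω) [IsProbabilityMeasure μ]
    (n : ℕ) (d z : Fin n → Ω → ℝ)
    (hd_meas : ∀ i, Measurable (d i))
    (hd_nonneg : ∀ i ω, 0 ≤ d i ω)
    (hd_L2 : ∀ i, MemLp (d i) 2 μ)
    (hz_meas : ∀ i, Measurable (z i))
    (hz_indep : iIndepFun z μ)
    (hz_law : ∀ i, Measure.map (z i) μ = Measure.map (d i) μ) :
    (1 / 2 : ℝ) * ∫ ω, (∑ i, z i ω) ^ 2 ∂μ ≤ ∫ ω, (∑ i, d i ω) ^ 2 ∂μ := by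
  -- z i is in L2
  have hz_L2 : ∀ i, MemLp (z i) 2 μ := by
    intro i
    have h1 : MemLp (id : ℝ → ℝ) 2 (Measure.map (d i) μ) :=
      (memLp_map_measure_iff aestronglyMeasurable_id (hd_meas i).aemeasurable).2 (hd_L2 i)
    rw [← hz_law i] at h1
    exact (memLp_map_measure_iff aestronglyMeasurable_id (hz_meas i).aemeasurable).1 h1
  -- equal laws give equal first and second moments
  have hmean : ∀ i, ∫ ω, z i ω ∂μ = ∫ ω, d i ω ∂μ := by
    intro i
    have h1 := integral_map (μ := μ) (hz_meas i).aemeasurable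
      (aestronglyMeasurable_id (μ := Measure.map (z i) μ) (α := ℝ))
    have h2 := integral_map (μ := μ) (hd_meas i).aemeasurable
      (aestronglyMeasurable_id (μ := Measure.map (d i) μ) (α := ℝ))
    rw [hz_law i] at h1
    simpa [Function.id_def] using h1.symm.trans h2
  have hsq : ∀ i, ∫ ω, (z i ω) ^ 2 ∂μ = ∫ ω, (d i ω) ^ 2 ∂μ := by
    intro i
    have hm : AEStronglyMeasurable (fun x : ℝ => x ^ 2) (Measure.map (d i) μ) :=
      (continuous_pow 2).aestronglyMeasurable
    have h1 := integral_map (μ := μ) (hz_meas i).aemeasurable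
      (hz_law i ▸ hm : AEStronglyMeasurable (fun x : ℝ => x ^ 2) (Measure.map (z i) μ))
    have h2 := integral_map (μ := μ) (hd_meas i).aemeasurable hm
    rw [hz_law i] at h1
    exact h1.symm.trans h2
  set A := ∫ ω, (∑ i, d i ω) ^ 2 ∂μ with hA
  have hdfun : (fun ω => ∑ i, d i ω) = ∑ i, d i := by ext ω; simp
  have hzfun : (fun ω => ∑ i, z i ω) = ∑ i, z i := by ext ω; simp
  have hdsum_L2 : MemLp (fun ω => ∑ i, d i ω) 2 μ := by
    rw [hdfun]; exact memLp_finset_sum' (μ := μ) Finset.univ (fun i _ => hd_L2 i)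
  have hzsum_L2 : MemLp (fun ω => ∑ i, z i ω) 2 μ := by
    rw [hzfun]; exact memLp_finset_sum' (μ := μ) Finset.univ (fun i _ => hz_L2 i)
  -- bound 1 : ∑ E d_i² ≤ A
  have hbound1 : ∑ i, ∫ ω, (d i ω) ^ 2 ∂μ ≤ A := by
    rw [← integral_finset_sum _ (fun i _ => (hd_L2 i).integrable_sq)]
    apply integral_mono (integrable_finset_sum _ (fun i _ => (hd_L2 i).integrable_sq))
      hdsum_L2.integrable_sq
    intro ω
    exact Finset.sum_sq_le_sq_sum_of_nonneg (fun i _ => hd_nonneg i ω)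
  -- bound 2 : (∑ E d_i)² ≤ A
  have hbound2 : (∑ i, ∫ ω, d i ω ∂μ) ^ 2 ≤ A := by
    have hv := variance_nonneg (fun ω => ∑ i, d i ω) μ
    rw [variance_eq_sub hdsum_L2] at hv
    have hint : ∫ ω, ∑ i, d i ω ∂μ = ∑ i, ∫ ω, d i ω ∂μ :=
      integral_finset_sum _ (fun i _ => (hd_L2 i).integrable one_le_two)
    simp only [Pi.pow_apply] at hv
    rw [← hint]
    linarith
  -- decompose E (∑ z)²
  have hvarz : variance (fun ω => ∑ i, z i ω) μ = ∑ i, variance (z i) μ := by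
    have h := IndepFun.variance_sum (μ := μ) (X := z) (s := Finset.univ)
      (fun i _ => hz_L2 i)
      (fun i _ j _ hij => hz_indep.indepFun hij)
    rw [hzfun]; exact h
  have hzdecomp : ∫ ω, (∑ i, z i ω) ^ 2 ∂μ
      = ∑ i, variance (z i) μ + (∑ i, ∫ ω, z i ω ∂μ) ^ 2 := by
    have h := variance_eq_sub hzsum_L2
    have hint : ∫ ω, ∑ i, z i ω ∂μ = ∑ i, ∫ ω, z i ω ∂μ :=
      integral_finset_sum _ (fun i _ => (hz_L2 i).integrable one_le_two)
    simp only [Pi.pow_apply] at h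
    rw [hvarz] at h
    rw [← hint]
    linarith
  have hvar_le : ∑ i, variance (z i) μ ≤ ∑ i, ∫ ω, (d i ω) ^ 2 ∂μ := by
    apply Finset.sum_le_sum
    intro i _
    rw [variance_eq_sub (hz_L2 i)]
    have := hsq i
    simp only [Pi.pow_apply] at this ⊢
    rw [this]
    nlinarith [sq_nonneg (∫ ω, z i ω ∂μ)]
  have hmeans : (∑ i, ∫ ω, z i ω ∂μ) ^ 2 = (∑ i, ∫ ω, d i ω ∂μ) ^ 2 := by
    congr 1
    exact Finset.sum_congr rfl fun i _ => hmean i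
  rw [hzdecomp, hmeans]
  linarith
end

section
/- The constant $1/2$ in the complete decoupling inequality is sharp: for each $n\ge 1$ there exist nonnegative random variables $d_1,\dots,d_n$ (namely, $(d_1,\dots,d_n)$ uniformly distributed over the standard unit vectors of $\mathbb{R}^n$) and independent $z_1,\dots,z_n$ with $z_i\stackrel{\mathcal L}{=} d_i$, such that $\mathbb{E}(\sum_{i=1}^n d_i)^2 = 1$ while $\mathbb{E}(\sum_{i=1}^n z_i)^2 = 2 - 1/n$. -/
open MeasureTheory ProbabilityTheory

open Set in
open scoped ENNReal in
lemma map_ind_eq {Ω : Type*} [MeasurableSpace Ω] (μ : Measure Ω) [IsFiniteMeasure μ]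
    (p q : Ω → Prop) [DecidablePred p] [DecidablePred q]
    (hA : MeasurableSet {ω | p ω}) (hB : MeasurableSet {ω | q ω})
    (hAB : μ {ω | p ω} = μ {ω | q ω}) :
    Measure.map (fun ω => if p ω then (1:ℝ) else 0) μ
      = Measure.map (fun ω => if q ω then (1:ℝ) else 0) μ := by
  classical
  have mp : Measurable (fun ω => if p ω then (1:ℝ) else 0) :=
    Measurable.ite hA measurable_const measurable_const
  have mq : Measurable (fun ω => if q ω then (1:ℝ) else 0) :=
    Measurable.ite hB measurable_const measurable_const
  have key : ∀ (r : Ω → Prop) [DecidablePred r] (s : Set ℝ),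
      (fun ω => if r ω then (1:ℝ) else 0) ⁻¹' s =
        if (1:ℝ) ∈ s then (if (0:ℝ) ∈ s then univ else {ω | r ω})
        else (if (0:ℝ) ∈ s then {ω | r ω}ᶜ else ∅) := by
    intro r _ s
    ext ω
    by_cases hr : r ω <;> by_cases h1 : (1:ℝ) ∈ s <;> by_cases h0 : (0:ℝ) ∈ s <;>
      simp [hr, h1, h0]
  ext s hs
  rw [Measure.map_apply mp hs, Measure.map_apply mq hs, key, key]
  have hcompl : μ {ω | p ω}ᶜ = μ {ω | q ω}ᶜ := by
    rw [measure_compl hA (measure_ne_top _ _), measure_compl hB (measure_ne_top _ _), hAB]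
  split_ifs <;> simp [hAB, hcompl]


open Set in
open scoped ENNReal in
/-- Sharpness of the constant `1/2` in the complete decoupling inequality: for each `n ≥ 1`
there exist nonnegative random variables `d i` (with `(d 1, ..., d n)` uniform over the
standard unit vectors of `ℝ^n`) and independent `z i` with `z i` equal in law to `d i`, such
that `E (∑ d i)^2 = 1` while `E (∑ z i)^2 = 2 - 1/n`. -/
theorem complete_decoupling_sharp (n : ℕ) (hn : 1 ≤ n) :
    ∃ (Ω : Type) (_ : MeasurableSpace Ω) (μ : Measure Ω) (_ : IsProbabilityMeasure μ)
      (d z : Fin n → Ω → ℝ),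
      (∀ i, Measurable (d i)) ∧ (∀ i, Measurable (z i)) ∧
      (∀ i ω, 0 ≤ d i ω) ∧
      (∀ k : Fin n, μ {ω | ∀ i, d i ω = if i = k then 1 else 0} = ENNReal.ofReal (1 / n)) ∧
      iIndepFun z μ ∧
      (∀ i, Measure.map (z i) μ = Measure.map (d i) μ) ∧
      ∫ ω, (∑ i, d i ω) ^ 2 ∂μ = 1 ∧
      ∫ ω, (∑ i, z i ω) ^ 2 ∂μ = 2 - 1 / n := by
  haveI : NeZero n := ⟨by omega⟩
  have hn0 : (n : ℝ≥0∞) ≠ 0 := by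
    simpa using NeZero.ne n
  have hnt : (n : ℝ≥0∞) ≠ ⊤ := ENNReal.natCast_ne_top n
  set ν : Measure (Fin n) := (n : ℝ≥0∞)⁻¹ • Measure.count with hνdef
  have hν_univ : ν univ = 1 := by
    simp [hνdef, Measure.count_univ, ENNReal.inv_mul_cancel hn0 hnt]
  haveI : IsProbabilityMeasure ν := ⟨hν_univ⟩
  have hν_single : ∀ x : Fin n, ν {x} = (n : ℝ≥0∞)⁻¹ := by
    intro x; simp [hνdef, Measure.count_singleton]
  set π : Measure (Fin n → Fin n) := Measure.pi (fun _ => ν) with hπdef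
  haveI : IsProbabilityMeasure π := by
    constructor
    rw [hπdef, ← Set.pi_univ Set.univ, Measure.pi_pi]
    simp [hν_univ]
  set μ : Measure (Fin n × (Fin n → Fin n)) := ν.prod π with hμdef
  haveI : IsProbabilityMeasure μ := by infer_instance
  -- basic measure computations
  have hπ_eval : ∀ (i : Fin n) (B : Set (Fin n)), π (Function.eval i ⁻¹' B) = ν B := by
    intro i B
    rw [Set.eval_preimage, hπdef, Measure.pi_pi]
    rw [Finset.prod_eq_single i (fun j _ hj => by simp [Function.update_of_ne hj, hν_univ])
      (by simp)]
    simp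
  have hμ_snd : ∀ T : Set (Fin n → Fin n), μ (Prod.snd ⁻¹' T) = π T := by
    intro T
    have : Prod.snd ⁻¹' T = (univ : Set (Fin n)) ×ˢ T := by ext ω; simp
    rw [this, hμdef, Measure.prod_prod, hν_univ, one_mul]
  have hμ_fst : ∀ T : Set (Fin n), μ (Prod.fst ⁻¹' T) = ν T := by
    intro T
    have : Prod.fst ⁻¹' T = T ×ˢ (univ : Set (Fin n → Fin n)) := by ext ω; simp
    rw [this, hμdef, Measure.prod_prod, measure_univ, mul_one]
  set d : Fin n → (Fin n × (Fin n → Fin n)) → ℝ :=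
    fun i ω => if ω.1 = i then 1 else 0 with hddef
  set z : Fin n → (Fin n × (Fin n → Fin n)) → ℝ :=
    fun i ω => if ω.2 i = 0 then 1 else 0 with hzdef
  -- independence
  have hindep : iIndepFun z μ := by
    rw [iIndepFun_iff_measure_inter_preimage_eq_mul]
    intro S sets hsets
    classical
    set B : Fin n → Set (Fin n) := fun i => (fun x : Fin n => if x = 0 then (1:ℝ) else 0) ⁻¹' sets i with hBdef
    have hpre : ∀ i, z i ⁻¹' sets i = Prod.snd ⁻¹' (Function.eval i ⁻¹' B i) := by
      intro i; rfl
    have hInter : ⋂ i ∈ S, z i ⁻¹' sets i = Prod.snd ⁻¹' (Set.pi ↑S B) := by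
      rw [Set.pi_def]
      simp only [hpre, Set.preimage_iInter]
      simp
    rw [hInter, hμ_snd, ← Set.pi_univ_ite, hπdef, Measure.pi_pi]
    have : ∀ i : Fin n, ν (if i ∈ (↑S : Set (Fin n)) then B i else univ)
        = if i ∈ S then ν (B i) else 1 := by
      intro i; by_cases h : i ∈ S <;> simp [h, hν_univ]
    simp only [this]
    rw [Finset.prod_ite_mem Finset.univ S, Finset.univ_inter]
    refine Finset.prod_congr rfl (fun i _ => ?_)
    rw [hpre, hμ_snd, hπ_eval]
  -- measures of basic sets
  have hset_z : ∀ i : Fin n, μ {ω : Fin n × (Fin n → Fin n) | ω.2 i = 0} = (n : ℝ≥0∞)⁻¹ := by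
    intro i
    have : {ω : Fin n × (Fin n → Fin n) | ω.2 i = 0}
        = Prod.snd ⁻¹' (Function.eval i ⁻¹' {0}) := rfl
    rw [this, hμ_snd, hπ_eval, hν_single]
  have hset_d : ∀ i : Fin n, μ {ω : Fin n × (Fin n → Fin n) | ω.1 = i} = (n : ℝ≥0∞)⁻¹ := by
    intro i
    have : {ω : Fin n × (Fin n → Fin n) | ω.1 = i} = Prod.fst ⁻¹' {i} := rfl
    rw [this, hμ_fst, hν_single]
  refine ⟨Fin n × (Fin n → Fin n), inferInstance, μ, inferInstance, d, z,
    fun i => Measurable.of_discrete, fun i => Measurable.of_discrete,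
    ?_, ?_, hindep, ?_, ?_, ?_⟩
  · intro i ω
    rw [hddef]
    dsimp only
    split_ifs <;> norm_num
  · -- uniform over unit vectors
    intro k
    have hset : {ω : Fin n × (Fin n → Fin n) | ∀ i, d i ω = if i = k then 1 else 0}
        = {ω : Fin n × (Fin n → Fin n) | ω.1 = k} := by
      ext ω
      simp only [hddef, Set.mem_setOf_eq]
      constructor
      · intro h
        have := h k
        by_contra hk
        simp [hk] at this
      · intro h i
        subst h
        by_cases hik : ω.1 = i
        · simp [hik]
        · simp [hik, Ne.symm hik]
    rw [hset, hset_d k]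
    rw [one_div, ← ENNReal.ofReal_natCast n, ← ENNReal.ofReal_inv_of_pos]
    exact_mod_cast Nat.pos_of_ne_zero (NeZero.ne n)
  · -- equality in law
    intro i
    exact (map_ind_eq μ (fun ω => ω.2 i = 0) (fun ω => ω.1 = i)
      MeasurableSet.of_discrete MeasurableSet.of_discrete
      (by rw [hset_z i, hset_d i])).trans rfl |>.trans rfl
  · -- first integral
    have : ∀ ω : Fin n × (Fin n → Fin n), (∑ i, d i ω) = 1 := by
      intro ω
      rw [hddef]
      simp [Finset.sum_ite_eq]
    simp only [this]
    simp
  · -- second integral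
    classical
    have hInt : ∀ f : (Fin n × (Fin n → Fin n)) → ℝ, Integrable f μ :=
      fun f => Integrable.of_finite
    have hnR : (n : ℝ) ≠ 0 := Nat.cast_ne_zero.mpr (NeZero.ne n)
    have hEz : ∀ i, ∫ ω, z i ω ∂μ = 1 / n := by
      intro i
      have hzi : z i = Set.indicator {ω : Fin n × (Fin n → Fin n) | ω.2 i = 0}
          (fun _ => (1:ℝ)) := by
        funext ω
        rw [hzdef, Set.indicator_apply]
        simp
      rw [hzi, integral_indicator_const _ MeasurableSet.of_discrete, measureReal_def, hset_z i]
      simp [ENNReal.toReal_inv]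
    have hEzz : ∀ i j, ∫ ω, z i ω * z j ω ∂μ
        = if i = j then (1:ℝ)/n else 1/n^2 := by
      intro i j
      by_cases hij : i = j
      · subst hij
        have : ∀ ω, z i ω * z i ω = z i ω := by
          intro ω
          rw [hzdef]
          dsimp only
          split_ifs <;> ring
        simp only [this, hEz i]
        simp
      · have h := IndepFun.integral_mul_eq_mul_integral (hindep.indepFun hij) (hInt _).aestronglyMeasurable (hInt _).aestronglyMeasurable
        rw [if_neg hij]
        calc ∫ ω, z i ω * z j ω ∂μ = ∫ ω, (z i * z j) ω ∂μ := rfl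
          _ = (∫ ω, z i ω ∂μ) * ∫ ω, z j ω ∂μ := h
          _ = 1/n^2 := by rw [hEz i, hEz j]; field_simp
    have hsq : ∀ ω, (∑ i, z i ω) ^ 2 = ∑ i, ∑ j, z i ω * z j ω := by
      intro ω
      rw [sq, Finset.sum_mul_sum]
    simp only [hsq]
    rw [integral_finset_sum _ (fun i _ => hInt _)]
    have : ∀ i : Fin n, ∫ ω, ∑ j, z i ω * z j ω ∂μ = ∑ j : Fin n, ∫ ω, z i ω * z j ω ∂μ :=
      fun i => integral_finset_sum _ (fun j _ => hInt _)
    simp only [this, hEzz]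
    have hrow : ∀ i : Fin n, ∑ j : Fin n, (if i = j then (1:ℝ)/n else 1/n^2)
        = (n : ℝ) * (1/n^2) + (1/n - 1/n^2) := by
      intro i
      have : ∀ j : Fin n, (if i = j then (1:ℝ)/n else 1/n^2)
          = 1/n^2 + (if i = j then (1/n - 1/n^2 : ℝ) else 0) := by
        intro j; split_ifs <;> ring
      simp only [this]
      rw [Finset.sum_add_distrib, Finset.sum_const, Finset.sum_ite_eq]
      simp [mul_comm]
    simp only [hrow, Finset.sum_const, Finset.card_univ, Fintype.card_fin, nsmul_eq_mul]
    field_simp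
    ring
end

section
/- Let $(d_i)_{i=1}^n$ and $(e_i)_{i=1}^n$ be square-integrable sequences adapted to a filtration $(\mathcal F_i)$, tangent to each other (i.e., $\mathcal L(d_i\mid\mathcal F_{i-1}) = \mathcal L(e_i\mid\mathcal F_{i-1})$ for all $i$), with $(e_i)$ conditionally independent given a $\sigma$-algebra $\mathcal G$ satisfying $\mathcal L(e_i\mid\mathcal F_{i-1}) = \mathcal L(e_i\mid\mathcal G)$. Then $\mathbb{E}\big[\sum_{i=1}^n d_i - \mathbb{E}(\sum_{i=1}^n e_i\mid\mathcal G)\big]^2 = \mathbb{E}\big[\sum_{i=1}^n e_i - \mathbb{E}(\sum_{i=1}^n e_i\mid\mathcal G)\big]^2$. -/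
open MeasureTheory ProbabilityTheory Filter
open scoped ENNReal Topology

section Aux

variable {Ω : Type*}

/-- Product of two L² functions is integrable. -/
lemma aux_integrable_mul {m0 : MeasurableSpace Ω} {μ : Measure Ω} {f g : Ω → ℝ}
    (hf : MemLp f 2 μ) (hg : MemLp g 2 μ) :
    Integrable (fun ω => f ω * g ω) μ := by
  have h := L2.integrable_inner (𝕜 := ℝ) (hf.toLp f) (hg.toLp g)
  refine h.congr ?_
  filter_upwards [hf.coeFn_toLp, hg.coeFn_toLp] with ω h1 h2
  simp [RCLike.inner_apply, h1, h2, mul_comm]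

/-- conditional expectation preserves `MemLp 2`. -/
lemma aux_memLp_two_condexp {m : MeasurableSpace Ω} {m0 : MeasurableSpace Ω} {μ : Measure Ω}
    [IsFiniteMeasure μ] (hm : m ≤ m0) {f : Ω → ℝ}
    (hf : MemLp f 2 μ) : MemLp (μ[f|m]) 2 μ := by
  haveI : IsFiniteMeasure (μ.trim hm) := isFiniteMeasure_trim hm
  set g : Lp ℝ 2 μ := (condExpL2 ℝ ℝ hm (hf.toLp f) : Lp ℝ 2 μ) with hgdef
  have h1 : Integrable (g : Ω → ℝ) μ := (Lp.memLp g).integrable one_le_two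
  have h2 := aestronglyMeasurable_condExpL2 (E := ℝ) (𝕜 := ℝ) (μ := μ) hm (hf.toLp f)
  have h3 : ∀ s, MeasurableSet[m] s → μ s < ∞ → ∫ x in s, (g : Ω → ℝ) x ∂μ = ∫ x in s, f x ∂μ := by
    intro s hs hμs
    rw [hgdef, integral_condExpL2_eq hm (hf.toLp f) hs hμs.ne]
    exact integral_congr_ae (ae_restrict_of_ae hf.coeFn_toLp)
  have hg : (g : Ω → ℝ) =ᵐ[μ] μ[f|m] :=
    ae_eq_condExp_of_forall_setIntegral_eq hm (hf.integrable one_le_two)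
      (fun s _ _ => h1.integrableOn) h3 h2
  exact (Lp.memLp g).ae_eq hg

end Aux

section Aux2

variable {Ω : Type*} {m : MeasurableSpace Ω} {m0 : MeasurableSpace Ω} {μ : Measure Ω}
  [IsProbabilityMeasure μ]

lemma aux_map_restrict_eq (hm : m ≤ m0) {d e : Ω → ℝ} (hd : Measurable d) (he : Measurable e)
    (h : ∀ s : Set ℝ, MeasurableSet s →
      μ[fun ω => s.indicator (fun _ => (1 : ℝ)) (d ω)|m]
        =ᵐ[μ] μ[fun ω => s.indicator (fun _ => (1 : ℝ)) (e ω)|m])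
    {A : Set Ω} (hA : MeasurableSet[m] A) :
    (μ.restrict A).map d = (μ.restrict A).map e := by
  haveI : IsFiniteMeasure (μ.trim hm) := isFiniteMeasure_trim hm
  ext s hs
  rw [Measure.map_apply hd hs, Measure.map_apply he hs]
  have hind : ∀ f : Ω → ℝ, (fun ω => s.indicator (fun _ => (1 : ℝ)) (f ω))
      = (f ⁻¹' s).indicator (fun _ => (1 : ℝ)) := by
    intro f; ext ω; by_cases hω : f ω ∈ s <;> simp [Set.indicator_apply, hω]
  have hint : ∀ f : Ω → ℝ, Measurable f →
      Integrable (fun ω => s.indicator (fun _ => (1 : ℝ)) (f ω)) μ := by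
    intro f hf; rw [hind f]; exact (integrable_const (1 : ℝ)).indicator (hf hs)
  have key : ∫ ω in A, s.indicator (fun _ => (1 : ℝ)) (d ω) ∂μ
      = ∫ ω in A, s.indicator (fun _ => (1 : ℝ)) (e ω) ∂μ := by
    rw [← setIntegral_condExp hm (hint d hd) hA, ← setIntegral_condExp hm (hint e he) hA]
    exact integral_congr_ae (ae_restrict_of_ae (h s hs))
  simp_rw [hind d, hind e, integral_indicator_const (μ := μ.restrict A) (1 : ℝ) (hd hs),
    integral_indicator_const (μ := μ.restrict A) (1 : ℝ) (he hs), smul_eq_mul, mul_one] at key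
  exact (ENNReal.toReal_eq_toReal_iff' (measure_ne_top _ _) (measure_ne_top _ _)).mp key

lemma aux_condexp_eq_of_indicator (hm : m ≤ m0) {d e : Ω → ℝ}
    (hd : Measurable d) (he : Measurable e) (hdi : Integrable d μ) (hei : Integrable e μ)
    (h : ∀ s : Set ℝ, MeasurableSet s →
      μ[fun ω => s.indicator (fun _ => (1 : ℝ)) (d ω)|m]
        =ᵐ[μ] μ[fun ω => s.indicator (fun _ => (1 : ℝ)) (e ω)|m]) :
    μ[d|m] =ᵐ[μ] μ[e|m] := by
  haveI : IsFiniteMeasure (μ.trim hm) := isFiniteMeasure_trim hm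
  have hset : ∀ A : Set Ω, MeasurableSet[m] A → ∫ ω in A, d ω ∂μ = ∫ ω in A, e ω ∂μ := by
    intro A hA
    have h1 : ∫ ω in A, d ω ∂μ = ∫ x, x ∂((μ.restrict A).map d) :=
      (integral_map hd.aemeasurable aestronglyMeasurable_id).symm
    have h2 : ∫ x, x ∂((μ.restrict A).map e) = ∫ ω in A, e ω ∂μ :=
      integral_map he.aemeasurable aestronglyMeasurable_id
    rw [h1, aux_map_restrict_eq hm hd he h hA, h2]
  exact (ae_eq_condExp_of_forall_setIntegral_eq hm hdi
    (fun s _ _ => integrable_condExp.integrableOn)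
    (fun s hs _ => (setIntegral_condExp hm hei hs).trans (hset s hs).symm)
    (StronglyMeasurable.aestronglyMeasurable stronglyMeasurable_condExp)).symm

lemma aux_integral_sq_eq (hm : m ≤ m0) {d e : Ω → ℝ}
    (hd : Measurable d) (he : Measurable e)
    (h : ∀ s : Set ℝ, MeasurableSet s →
      μ[fun ω => s.indicator (fun _ => (1 : ℝ)) (d ω)|m]
        =ᵐ[μ] μ[fun ω => s.indicator (fun _ => (1 : ℝ)) (e ω)|m]) :
    ∫ ω, d ω ^ 2 ∂μ = ∫ ω, e ω ^ 2 ∂μ := by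
  have hmap : μ.map d = μ.map e := by
    have h2 := aux_map_restrict_eq hm hd he h (A := Set.univ) MeasurableSet.univ
    rwa [Measure.restrict_univ] at h2
  have hsq : AEStronglyMeasurable (fun x : ℝ => x ^ 2) (μ.map d) :=
    (measurable_id.pow_const 2).aestronglyMeasurable
  calc ∫ ω, d ω ^ 2 ∂μ = ∫ x, x ^ 2 ∂(μ.map d) :=
        (integral_map hd.aemeasurable hsq).symm
    _ = ∫ x, x ^ 2 ∂(μ.map e) := by rw [hmap]
    _ = ∫ ω, e ω ^ 2 ∂μ := integral_map he.aemeasurable (hmap ▸ hsq)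

lemma aux_orth (hm : m ≤ m0) {X Y φ : Ω → ℝ}
    (hX : MemLp X 2 μ) (hY : MemLp Y 2 μ) (hφ : MemLp φ 2 μ)
    (hφm : StronglyMeasurable[m] φ)
    (hXY : μ[X|m] =ᵐ[μ] μ[Y|m]) :
    ∫ ω, φ ω * (X ω - Y ω) ∂μ = 0 := by
  haveI : IsFiniteMeasure (μ.trim hm) := isFiniteMeasure_trim hm
  have hXi : Integrable X μ := hX.integrable one_le_two
  have hYi : Integrable Y μ := hY.integrable one_le_two
  have hsub : MemLp (fun ω => X ω - Y ω) 2 μ := hX.sub hY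
  have hint : Integrable (fun ω => φ ω * (X ω - Y ω)) μ := aux_integrable_mul hφ hsub
  have hint' : Integrable (φ * fun ω => X ω - Y ω) μ := hint
  have h1 : μ[φ * fun ω => X ω - Y ω|m] =ᵐ[μ] φ * μ[fun ω => X ω - Y ω|m] :=
    condExp_mul_of_stronglyMeasurable_left hφm hint' (hXi.sub hYi)
  have h2 : μ[fun ω => X ω - Y ω|m] =ᵐ[μ] 0 := by
    have h3 := condExp_sub (m := m) hXi hYi
    refine h3.trans ?_
    filter_upwards [hXY] with ω hω
    simp [hω]
  have h4 : μ[φ * fun ω => X ω - Y ω|m] =ᵐ[μ] 0 := by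
    refine h1.trans ?_
    filter_upwards [h2] with ω hω
    simp [hω]
  have h5 : ∫ ω, (φ * fun ω' => X ω' - Y ω') ω ∂μ = 0 := by
    calc ∫ ω, (φ * fun ω' => X ω' - Y ω') ω ∂μ
        = ∫ ω, (μ[φ * fun ω' => X ω' - Y ω'|m]) ω ∂μ := (integral_condExp hm).symm
      _ = 0 := by rw [integral_congr_ae h4]; simp
  exact h5

end Aux2
set_option synthInstance.maxHeartbeats 1000000 in
lemma aux_condexp_eq_of_indicator₂ {Ω : Type*} {m₁ m₂ : MeasurableSpace Ω}
    {m0 : MeasurableSpace Ω} {μ : Measure Ω} [IsProbabilityMeasure μ]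
    (hm₁ : m₁ ≤ m0) (hm₂ : m₂ ≤ m0)
    {e : Ω → ℝ} (he : Measurable e) (hei : Integrable e μ)
    (h : ∀ s : Set ℝ, MeasurableSet s →
      μ[fun ω => s.indicator (fun _ => (1 : ℝ)) (e ω)|m₁]
        =ᵐ[μ] μ[fun ω => s.indicator (fun _ => (1 : ℝ)) (e ω)|m₂]) :
    μ[e|m₁] =ᵐ[μ] μ[e|m₂] := by
  haveI : IsFiniteMeasure (μ.trim hm₁) := isFiniteMeasure_trim hm₁
  haveI : IsFiniteMeasure (μ.trim hm₂) := isFiniteMeasure_trim hm₂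
  set ν : Measure ℝ := μ.map e with hν
  have hcomp : ∀ g : ℝ →₁[ν] ℝ, Integrable (fun ω => (g : ℝ → ℝ) (e ω)) μ := fun g =>
    (integrable_map_measure (Lp.aestronglyMeasurable g) he.aemeasurable).mp (L1.integrable_coeFn g)
  have hkey : ∀ ⦃f : ℝ → ℝ⦄, Integrable f ν →
      μ[fun ω => f (e ω)|m₁] =ᵐ[μ] μ[fun ω => f (e ω)|m₂] := by
    refine Integrable.induction (μ := ν)
      (P := fun f => μ[fun ω => f (e ω)|m₁] =ᵐ[μ] μ[fun ω => f (e ω)|m₂]) ?_ ?_ ?_ ?_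
    · intro c s hs _
      have hc : (fun ω => (s.indicator (fun _ => c)) (e ω))
          = fun ω => c • (s.indicator (fun _ => (1 : ℝ)) (e ω)) := by
        ext ω; by_cases hω : e ω ∈ s <;> simp [Set.indicator_apply, hω]
      rw [hc]
      calc μ[fun ω => c • (s.indicator (fun _ => (1 : ℝ)) (e ω))|m₁]
          =ᵐ[μ] c • μ[fun ω => s.indicator (fun _ => (1 : ℝ)) (e ω)|m₁] := condExp_smul c _ _
        _ =ᵐ[μ] c • μ[fun ω => s.indicator (fun _ => (1 : ℝ)) (e ω)|m₂] := by
            filter_upwards [h s hs] with ω hω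
            simp only [Pi.smul_apply, hω]
        _ =ᵐ[μ] μ[fun ω => c • (s.indicator (fun _ => (1 : ℝ)) (e ω))|m₂] :=
            (condExp_smul c _ _).symm
    · intro f g _ hf hg hPf hPg
      have hf' : Integrable (fun ω => f (e ω)) μ :=
        (integrable_map_measure hf.aestronglyMeasurable he.aemeasurable).mp hf
      have hg' : Integrable (fun ω => g (e ω)) μ :=
        (integrable_map_measure hg.aestronglyMeasurable he.aemeasurable).mp hg
      have hsum : (fun ω => (f + g) (e ω)) = (fun ω => f (e ω)) + fun ω => g (e ω) := rfl
      rw [hsum]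
      calc μ[(fun ω => f (e ω)) + (fun ω => g (e ω))|m₁]
          =ᵐ[μ] μ[fun ω => f (e ω)|m₁] + μ[fun ω => g (e ω)|m₁] := condExp_add hf' hg' _
        _ =ᵐ[μ] μ[fun ω => f (e ω)|m₂] + μ[fun ω => g (e ω)|m₂] := hPf.add hPg
        _ =ᵐ[μ] μ[(fun ω => f (e ω)) + (fun ω => g (e ω))|m₂] := (condExp_add hf' hg' _).symm
    · -- closedness
      refine IsSeqClosed.isClosed ?_
      intro fs f hfs hlim
      rw [Lp.tendsto_Lp_iff_tendsto_eLpNorm'] at hlim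
      have step : ∀ (mi : MeasurableSpace Ω), mi ≤ m0 → ∀ g : ℝ →₁[ν] ℝ,
          eLpNorm ((μ[fun ω => (g : ℝ → ℝ) (e ω)|mi]) - μ[fun ω => (f : ℝ → ℝ) (e ω)|mi]) 1 μ
            ≤ eLpNorm (⇑g - ⇑f) 1 ν := by
        intro mi hmi g
        haveI : IsFiniteMeasure (μ.trim hmi) := isFiniteMeasure_trim hmi
        have h1 : (μ[fun ω => (g : ℝ → ℝ) (e ω)|mi]) - μ[fun ω => (f : ℝ → ℝ) (e ω)|mi]
            =ᵐ[μ] μ[(fun ω => (g : ℝ → ℝ) (e ω)) - fun ω => (f : ℝ → ℝ) (e ω)|mi] :=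
          (condExp_sub (hcomp g) (hcomp f) _).symm
        rw [eLpNorm_congr_ae h1]
        refine le_trans (eLpNorm_one_condExp_le_eLpNorm _) (le_of_eq ?_)
        have h2 : eLpNorm (⇑g - ⇑f) 1 ν = eLpNorm ((⇑g - ⇑f) ∘ e) 1 μ :=
          eLpNorm_map_measure ((Lp.aestronglyMeasurable g).sub (Lp.aestronglyMeasurable f))
            he.aemeasurable
        rw [h2]; rfl
      have hA : Tendsto (fun k =>
          eLpNorm ((μ[fun ω => ((fs k : ℝ → ℝ)) (e ω)|m₁])
            - μ[fun ω => (f : ℝ → ℝ) (e ω)|m₁]) 1 μ) atTop (𝓝 0) :=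
        tendsto_of_tendsto_of_tendsto_of_le_of_le tendsto_const_nhds hlim
          (fun _ => zero_le) (fun k => step m₁ hm₁ (fs k))
      have hC : Tendsto (fun k =>
          eLpNorm ((μ[fun ω => ((fs k : ℝ → ℝ)) (e ω)|m₂])
            - μ[fun ω => (f : ℝ → ℝ) (e ω)|m₂]) 1 μ) atTop (𝓝 0) :=
        tendsto_of_tendsto_of_tendsto_of_le_of_le tendsto_const_nhds hlim
          (fun _ => zero_le) (fun k => step m₂ hm₂ (fs k))
      set A := μ[fun ω => (f : ℝ → ℝ) (e ω)|m₁] with hAdef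
      set C := μ[fun ω => (f : ℝ → ℝ) (e ω)|m₂] with hCdef
      have hmeasA : AEStronglyMeasurable A μ :=
        (stronglyMeasurable_condExp.mono hm₁).aestronglyMeasurable
      have hmeasC : AEStronglyMeasurable C μ :=
        (stronglyMeasurable_condExp.mono hm₂).aestronglyMeasurable
      have hle : ∀ k, eLpNorm (A - C) 1 μ ≤
          eLpNorm ((μ[fun ω => ((fs k : ℝ → ℝ)) (e ω)|m₁]) - A) 1 μ
          + eLpNorm ((μ[fun ω => ((fs k : ℝ → ℝ)) (e ω)|m₂]) - C) 1 μ := by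
        intro k
        set Bk := μ[fun ω => ((fs k : ℝ → ℝ)) (e ω)|m₁] with hBdef
        set Ck := μ[fun ω => ((fs k : ℝ → ℝ)) (e ω)|m₂] with hCkdef
        have hsplit : A - C = (A - Bk) + (Bk - C) := by abel
        have hmeasB : AEStronglyMeasurable Bk μ :=
          (stronglyMeasurable_condExp.mono hm₁).aestronglyMeasurable
        calc eLpNorm (A - C) 1 μ = eLpNorm ((A - Bk) + (Bk - C)) 1 μ := by rw [← hsplit]
          _ ≤ eLpNorm (A - Bk) 1 μ + eLpNorm (Bk - C) 1 μ :=
              eLpNorm_add_le (hmeasA.sub hmeasB) (hmeasB.sub hmeasC) le_rfl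
          _ = eLpNorm (Bk - A) 1 μ + eLpNorm (Ck - C) 1 μ := by
              rw [eLpNorm_sub_comm]
              congr 1
              refine eLpNorm_congr_ae ?_
              filter_upwards [hfs k] with ω hω
              simp only [Pi.sub_apply, hBdef, hCkdef]
              rw [hω]
      have h0 : eLpNorm (A - C) 1 μ ≤ 0 :=
        ge_of_tendsto (by simpa using hA.add hC) (Eventually.of_forall hle)
      have hzero : A - C =ᵐ[μ] 0 := by
        refine (eLpNorm_eq_zero_iff (hmeasA.sub hmeasC) one_ne_zero).mp (le_antisymm h0 zero_le)
      filter_upwards [hzero] with ω hω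
      have := sub_eq_zero.mp hω
      exact this
    · intro f g hfg hfi hPf
      have he' : (fun ω => f (e ω)) =ᵐ[μ] fun ω => g (e ω) := ae_eq_comp he.aemeasurable hfg
      exact (condExp_congr_ae he'.symm).trans (hPf.trans (condExp_congr_ae he'))
  have hid : Integrable (fun x : ℝ => x) ν :=
    (integrable_map_measure aestronglyMeasurable_id he.aemeasurable).mpr hei
  exact hkey hid


/-- For tangent sequences `d`, `e` with `e` conditionally independent given `𝒢` and matching
conditional laws, `E (∑ d i - E(∑ e i | 𝒢))^2 = E (∑ e i - E(∑ e i | 𝒢))^2`. -/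
theorem decoupled_centered_second_moments_eq
    {Ω : Type*} (𝒢 : MeasurableSpace Ω) {m0 : MeasurableSpace Ω} (μ : Measure Ω) [IsProbabilityMeasure μ]
    (n : ℕ) (F : ℕ → MeasurableSpace Ω) (hF_mono : Monotone F) (hF_le : ∀ i, F i ≤ m0)
    (h𝒢 : 𝒢 ≤ m0)
    (d e : ℕ → Ω → ℝ)
    (hd_meas : ∀ i, Measurable (d i)) (he_meas : ∀ i, Measurable (e i))
    (hd_adapted : ∀ i, Measurable[F i] (d i)) (he_adapted : ∀ i, Measurable[F i] (e i))
    (hd_L2 : ∀ i, MemLp (d i) 2 μ) (he_L2 : ∀ i, MemLp (e i) 2 μ)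
    -- conditional independence of the `e i` given `𝒢`
    (hCI : ∀ (S : Finset ℕ) (s : ℕ → Set ℝ), (∀ i, MeasurableSet (s i)) →
      μ[fun ω => ∏ i ∈ S, (s i).indicator (fun _ => (1 : ℝ)) (e i ω)|𝒢]
        =ᵐ[μ] fun ω => ∏ i ∈ S,
          (μ[fun ω' => (s i).indicator (fun _ => (1 : ℝ)) (e i ω')|𝒢]) ω)
    -- `L(e i | F (i-1)) = L(e i | 𝒢)`
    (hcondLaw : ∀ i, 1 ≤ i → ∀ s : Set ℝ, MeasurableSet s →
      μ[fun ω => s.indicator (fun _ => (1 : ℝ)) (e i ω)|F (i - 1)]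
        =ᵐ[μ] μ[fun ω => s.indicator (fun _ => (1 : ℝ)) (e i ω)|𝒢])
    -- tangency: `L(d i | F (i-1)) = L(e i | F (i-1))`
    (htangent : ∀ i, 1 ≤ i → ∀ s : Set ℝ, MeasurableSet s →
      μ[fun ω => s.indicator (fun _ => (1 : ℝ)) (d i ω)|F (i - 1)]
        =ᵐ[μ] μ[fun ω => s.indicator (fun _ => (1 : ℝ)) (e i ω)|F (i - 1)]) :
    ∫ ω, ((∑ i ∈ Finset.Icc 1 n, d i ω)
            - (μ[fun ω' => ∑ i ∈ Finset.Icc 1 n, e i ω'|𝒢]) ω) ^ 2 ∂μ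
      = ∫ ω, ((∑ i ∈ Finset.Icc 1 n, e i ω)
            - (μ[fun ω' => ∑ i ∈ Finset.Icc 1 n, e i ω'|𝒢]) ω) ^ 2 ∂μ := by
  classical
  set I : Finset ℕ := Finset.Icc 1 n with hIdef
  have hd_m0 : ∀ i, Measurable[m0] (d i) := fun i => (hd_adapted i).mono (hF_le i) le_rfl
  have he_m0 : ∀ i, Measurable[m0] (e i) := fun i => (he_adapted i).mono (hF_le i) le_rfl
  have hd_int : ∀ i, Integrable (d i) μ := fun i => (hd_L2 i).integrable one_le_two
  have he_int : ∀ i, Integrable (e i) μ := fun i => (he_L2 i).integrable one_le_two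
  set Sd : Ω → ℝ := fun ω => ∑ i ∈ I, d i ω with hSddef
  set Se : Ω → ℝ := fun ω => ∑ i ∈ I, e i ω with hSedef
  set M : Ω → ℝ := μ[Se|𝒢] with hMdef
  set h : ℕ → Ω → ℝ := fun j => μ[e j|F (j - 1)] with hhdef
  have hSd_L2 : MemLp Sd 2 μ := memLp_finset_sum I (fun i _ => hd_L2 i)
  have hSe_L2 : MemLp Se 2 μ := memLp_finset_sum I (fun i _ => he_L2 i)
  have hM_L2 : MemLp M 2 μ := aux_memLp_two_condexp h𝒢 hSe_L2
  have hh_sm : ∀ j, StronglyMeasurable[F (j - 1)] (h j) := fun j => stronglyMeasurable_condExp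
  have hh_L2 : ∀ j, MemLp (h j) 2 μ := fun j => aux_memLp_two_condexp (hF_le _) (he_L2 j)
  -- tangency of conditional expectations
  have hde : ∀ i, 1 ≤ i → μ[d i|F (i - 1)] =ᵐ[μ] μ[e i|F (i - 1)] := fun i hi =>
    aux_condexp_eq_of_indicator (hF_le _) (hd_m0 i) (he_m0 i) (hd_int i) (he_int i)
      (htangent i hi)
  -- `h j` is a version of `μ[e j|𝒢]`
  have hB : ∀ j, 1 ≤ j → h j =ᵐ[μ] μ[e j|𝒢] := fun j hj =>
    aux_condexp_eq_of_indicator₂ (hF_le _) h𝒢 (he_m0 j) (he_int j) (hcondLaw j hj)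
  -- `M` is a.e. the sum of the `h j`
  have hMsum : M =ᵐ[μ] fun ω => ∑ j ∈ I, h j ω := by
    have h1 : M =ᵐ[μ] ∑ j ∈ I, μ[e j|𝒢] := by
      refine (condExp_congr_ae (m := 𝒢) ?_).trans (condExp_finsetSum (fun j _ => he_int j) 𝒢)
      exact Eventually.of_forall (fun ω => by simp [hSedef])
    refine h1.trans ?_
    have h2 : ∀ᵐ ω ∂μ, ∀ j ∈ I, (μ[e j|𝒢]) ω = h j ω := by
      rw [eventually_all_finset]
      intro j hj
      filter_upwards [(hB j (Finset.mem_Icc.mp hj).1).symm] with ω hω using hω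
    filter_upwards [h2] with ω hω
    rw [Finset.sum_apply]
    exact Finset.sum_congr rfl hω
  -- reduce to vanishing of the integral of the difference
  have hint1 : Integrable (fun ω => (Sd ω - M ω) ^ 2) μ := (hSd_L2.sub hM_L2).integrable_sq
  have hint2 : Integrable (fun ω => (Se ω - M ω) ^ 2) μ := (hSe_L2.sub hM_L2).integrable_sq
  show ∫ ω, (Sd ω - M ω) ^ 2 ∂μ = ∫ ω, (Se ω - M ω) ^ 2 ∂μ
  rw [← sub_eq_zero, ← integral_sub hint1 hint2]
  -- expand as a double sum
  have hae : (fun ω => (Sd ω - M ω) ^ 2 - (Se ω - M ω) ^ 2)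
      =ᵐ[μ] fun ω => ∑ i ∈ I, ∑ j ∈ I,
        (d i ω - e i ω) * (d j ω + e j ω - 2 * h j ω) := by
    filter_upwards [hMsum] with ω hω
    have expand : ∑ i ∈ I, ∑ j ∈ I, (d i ω - e i ω) * (d j ω + e j ω - 2 * h j ω)
        = (∑ i ∈ I, (d i ω - e i ω)) * (∑ j ∈ I, (d j ω + e j ω - 2 * h j ω)) :=
      (Finset.sum_mul_sum _ _ _ _).symm
    have h1 : ∑ j ∈ I, (d j ω + e j ω - 2 * h j ω)
        = Sd ω + Se ω - 2 * ∑ j ∈ I, h j ω := by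
      simp [Finset.sum_sub_distrib, Finset.sum_add_distrib, Finset.mul_sum, hSddef, hSedef]
    have h2 : ∑ i ∈ I, (d i ω - e i ω) = Sd ω - Se ω := by
      simp [Finset.sum_sub_distrib, hSddef, hSedef]
    rw [expand, h1, h2, hω]
    ring
  rw [integral_congr_ae hae]
  -- integrability of the individual terms
  have hterm_int : ∀ i j : ℕ, Integrable
      (fun ω => (d i ω - e i ω) * (d j ω + e j ω - 2 * h j ω)) μ := by
    intro i j
    exact aux_integrable_mul ((hd_L2 i).sub (he_L2 i))
      (((hd_L2 j).add (he_L2 j)).sub ((hh_L2 j).const_mul 2))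
  rw [integral_finset_sum I (fun i _ => integrable_finset_sum I (fun j _ => hterm_int i j))]
  refine Finset.sum_eq_zero fun i hi => ?_
  rw [integral_finset_sum I (fun j _ => hterm_int i j)]
  refine Finset.sum_eq_zero fun j hj => ?_
  have hi1 : 1 ≤ i := (Finset.mem_Icc.mp hi).1
  have hj1 : 1 ≤ j := (Finset.mem_Icc.mp hj).1
  rcases lt_trichotomy j i with hji | rfl | hij
  · -- j < i : the second factor is `F (i-1)`-measurable
    have hle1 : F j ≤ F (i - 1) := hF_mono (Nat.le_pred_of_lt hji)
    have hle2 : F (j - 1) ≤ F (i - 1) := (hF_mono (Nat.sub_le j 1)).trans hle1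
    have hφ_sm : StronglyMeasurable[F (i - 1)]
        (fun ω => d j ω + e j ω - 2 * h j ω) := by
      refine StronglyMeasurable.sub ?_ ?_
      · exact (((hd_adapted j).mono hle1 le_rfl).stronglyMeasurable).add
          (((he_adapted j).mono hle1 le_rfl).stronglyMeasurable)
      · exact stronglyMeasurable_const.mul ((hh_sm j).mono hle2)
    have horth := aux_orth (hF_le (i - 1)) (hd_L2 i) (he_L2 i)
      (((hd_L2 j).add (he_L2 j)).sub ((hh_L2 j).const_mul 2)) hφ_sm (hde i hi1)
    calc ∫ ω, (d i ω - e i ω) * (d j ω + e j ω - 2 * h j ω) ∂μ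
        = ∫ ω, (d j ω + e j ω - 2 * h j ω) * (d i ω - e i ω) ∂μ := by
          congr 1; ext ω; ring
      _ = 0 := horth
  · -- j = i : use equality of laws and orthogonality
    have e1 : ∫ ω, (d j ω ^ 2 - e j ω ^ 2) ∂μ = 0 := by
      rw [integral_sub (hd_L2 j).integrable_sq (he_L2 j).integrable_sq,
        aux_integral_sq_eq (hF_le (j - 1)) (hd_m0 j) (he_m0 j) (htangent j hj1), sub_self]
    have e2 : ∫ ω, h j ω * (d j ω - e j ω) ∂μ = 0 :=
      aux_orth (hF_le (j - 1)) (hd_L2 j) (he_L2 j) (hh_L2 j) (hh_sm j) (hde j hj1)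
    have hsplit : (fun ω => (d j ω - e j ω) * (d j ω + e j ω - 2 * h j ω))
        = fun ω => (d j ω ^ 2 - e j ω ^ 2) - 2 * (h j ω * (d j ω - e j ω)) := by
      ext ω; ring
    have int1 : Integrable (fun ω => d j ω ^ 2 - e j ω ^ 2) μ :=
      (hd_L2 j).integrable_sq.sub (he_L2 j).integrable_sq
    have int2 : Integrable (fun ω => 2 * (h j ω * (d j ω - e j ω))) μ :=
      (aux_integrable_mul (hh_L2 j) ((hd_L2 j).sub (he_L2 j))).const_mul 2
    have hml : ∫ ω, 2 * (h j ω * (d j ω - e j ω)) ∂μ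
        = 2 * ∫ ω, h j ω * (d j ω - e j ω) ∂μ := integral_const_mul 2 _
    rw [hsplit, integral_sub int1 int2, e1, hml, e2]
    ring
  · -- i < j : the first factor is `F (j-1)`-measurable
    have hle1 : F i ≤ F (j - 1) := hF_mono (Nat.le_pred_of_lt hij)
    have hφ_sm : StronglyMeasurable[F (j - 1)] (fun ω => d i ω - e i ω) :=
      (((hd_adapted i).mono hle1 le_rfl).stronglyMeasurable).sub
        (((he_adapted i).mono hle1 le_rfl).stronglyMeasurable)
    have hφ_L2 : MemLp (fun ω => d i ω - e i ω) 2 μ := (hd_L2 i).sub (he_L2 i)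
    have hch : μ[h j|F (j - 1)] = h j :=
      condExp_of_stronglyMeasurable (hF_le _) (hh_sm j) integrable_condExp
    have hcd : μ[d j|F (j - 1)] =ᵐ[μ] μ[h j|F (j - 1)] := by
      rw [hch]; exact hde j hj1
    have hce : μ[e j|F (j - 1)] =ᵐ[μ] μ[h j|F (j - 1)] := by
      rw [hch]
    have t1 : ∫ ω, (d i ω - e i ω) * (d j ω - h j ω) ∂μ = 0 :=
      aux_orth (hF_le (j - 1)) (hd_L2 j) (hh_L2 j) hφ_L2 hφ_sm hcd
    have t2 : ∫ ω, (d i ω - e i ω) * (e j ω - h j ω) ∂μ = 0 :=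
      aux_orth (hF_le (j - 1)) (he_L2 j) (hh_L2 j) hφ_L2 hφ_sm hce
    have hsplit : (fun ω => (d i ω - e i ω) * (d j ω + e j ω - 2 * h j ω))
        = fun ω => (d i ω - e i ω) * (d j ω - h j ω)
          + (d i ω - e i ω) * (e j ω - h j ω) := by
      ext ω; ring
    have int1 : Integrable (fun ω => (d i ω - e i ω) * (d j ω - h j ω)) μ :=
      aux_integrable_mul hφ_L2 ((hd_L2 j).sub (hh_L2 j))
    have int2 : Integrable (fun ω => (d i ω - e i ω) * (e j ω - h j ω)) μ :=
      aux_integrable_mul hφ_L2 ((he_L2 j).sub (hh_L2 j))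
    rw [hsplit, integral_add int1 int2, t1, t2, add_zero]
end

section
/- Let $S_n = \sum_{i=1}^n d_i \ge 0$ a.s. with $(e_i)$ a decoupled version of the square-integrable sequence $(d_i)$ and $S_n' = \sum_{i=1}^n e_i$. Then for any $0<\theta<1$, $\mathbb{P}(S_n > \theta\,\mathbb{E} S_n) \ge (1-\theta)^2\,\dfrac{(\mathbb{E} S_n)^2}{2\,\mathbb{E}[(S_n')^2] - (\mathbb{E} S_n)^2}$. -/
open MeasureTheory ProbabilityTheory

open Filter Topology

namespace TangentDecouplingAux

lemma integrable_mul_L2 {Ω : Type*} {m0 : MeasurableSpace Ω} {μ : Measure Ω} [IsFiniteMeasure μ]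
    {f g : Ω → ℝ} (hf : MemLp f 2 μ) (hg : MemLp g 2 μ) :
    Integrable (fun ω => f ω * g ω) μ := by
  refine (hf.integrable_sq.add hg.integrable_sq).mono' (hf.1.mul hg.1) ?_
  filter_upwards with ω
  simp only [Real.norm_eq_abs, Pi.add_apply]
  rcases abs_cases (f ω * g ω) with ⟨h, _⟩ | ⟨h, _⟩ <;>
    nlinarith [sq_nonneg (f ω - g ω), sq_nonneg (f ω + g ω)]

lemma memℒp_two_condexp {Ω : Type*} {m : MeasurableSpace Ω} {m0 : MeasurableSpace Ω}
    {μ : Measure Ω} [IsFiniteMeasure μ] (hm : m ≤ m0)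
    {f : Ω → ℝ} (hf : MemLp f 2 μ) : MemLp (μ[f|m]) 2 μ := by
  have hfi : Integrable f μ := hf.integrable one_le_two
  have hgmem : MemLp ((condExpL2 ℝ ℝ hm (hf.toLp f) : Lp ℝ 2 μ) : Ω → ℝ) 2 μ := Lp.memLp _
  have h : ((condExpL2 ℝ ℝ hm (hf.toLp f) : Lp ℝ 2 μ) : Ω → ℝ) =ᵐ[μ] μ[f|m] := by
    refine ae_eq_condExp_of_forall_setIntegral_eq hm hfi
      (fun s _ _ => (hgmem.integrable one_le_two).integrableOn)
      (fun s hs hμs => ?_) (lpMeas.aestronglyMeasurable _)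
    rw [integral_condExpL2_eq hm (hf.toLp f) hs hμs.ne]
    exact setIntegral_congr_ae (hm s hs) ((hf.coeFn_toLp).mono fun ω h _ => h)
  exact hgmem.ae_eq h

lemma integrable_indC {Ω : Type*} {m0 : MeasurableSpace Ω} {μ : Measure Ω} [IsFiniteMeasure μ]
    {s : Set ℝ} (hs : MeasurableSet s) {X : Ω → ℝ} (hX : Measurable X) :
    Integrable (fun ω => s.indicator (fun _ => (1 : ℝ)) (X ω)) μ := by
  have h : (fun ω => s.indicator (fun _ => (1 : ℝ)) (X ω))
      = (X ⁻¹' s).indicator (fun _ => (1 : ℝ)) := by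
    ext ω; by_cases h : X ω ∈ s <;> simp [Set.indicator, h]
  rw [h]
  exact (integrable_const 1).indicator (hX hs)

lemma setIntegral_indC {Ω : Type*} {m0 : MeasurableSpace Ω} {μ : Measure Ω}
    {s : Set ℝ} (hs : MeasurableSet s) {X : Ω → ℝ} (hX : Measurable X) {A : Set Ω} :
    ∫ ω in A, s.indicator (fun _ => (1 : ℝ)) (X ω) ∂μ = (μ.restrict A (X ⁻¹' s)).toReal := by
  have h : (fun ω => s.indicator (fun _ => (1 : ℝ)) (X ω))
      = (X ⁻¹' s).indicator (fun _ => (1 : ℝ)) := by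
    ext ω; by_cases h : X ω ∈ s <;> simp [Set.indicator, h]
  rw [h]
  exact integral_indicator_one (hX hs)

lemma map_restrict_eq {Ω : Type*} {ℱ : MeasurableSpace Ω} {m0 : MeasurableSpace Ω}
    {μ : Measure Ω} [IsFiniteMeasure μ] (hℱ : ℱ ≤ m0) {X Y : Ω → ℝ}
    (hX : Measurable X) (hY : Measurable Y)
    (H : ∀ s : Set ℝ, MeasurableSet s →
      μ[fun ω => s.indicator (fun _ => (1 : ℝ)) (X ω)|ℱ]
        =ᵐ[μ] μ[fun ω => s.indicator (fun _ => (1 : ℝ)) (Y ω)|ℱ])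
    {A : Set Ω} (hA : MeasurableSet[ℱ] A) :
    (μ.restrict A).map X = (μ.restrict A).map Y := by
  ext s hs
  rw [Measure.map_apply hX hs, Measure.map_apply hY hs]
  have h1 : ∫ ω in A, s.indicator (fun _ => (1 : ℝ)) (X ω) ∂μ
      = ∫ ω in A, s.indicator (fun _ => (1 : ℝ)) (Y ω) ∂μ := by
    rw [← setIntegral_condExp hℱ (integrable_indC hs hX) hA,
      ← setIntegral_condExp hℱ (integrable_indC hs hY) hA]
    exact setIntegral_congr_ae (hℱ A hA) ((H s hs).mono fun ω h _ => h)
  rw [setIntegral_indC hs hX, setIntegral_indC hs hY,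
    Measure.restrict_apply (hX hs), Measure.restrict_apply (hY hs)] at h1
  have h2 := ENNReal.toReal_eq_toReal_iff' (measure_ne_top μ _) (measure_ne_top μ _) |>.mp h1
  rw [Measure.restrict_apply (hX hs), Measure.restrict_apply (hY hs)]
  exact h2

lemma setIntegral_eq_of_indC {Ω : Type*} {ℱ : MeasurableSpace Ω} {m0 : MeasurableSpace Ω}
    {μ : Measure Ω} [IsFiniteMeasure μ] (hℱ : ℱ ≤ m0) {X Y : Ω → ℝ}
    (hX : Measurable X) (hY : Measurable Y)
    (H : ∀ s : Set ℝ, MeasurableSet s →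
      μ[fun ω => s.indicator (fun _ => (1 : ℝ)) (X ω)|ℱ]
        =ᵐ[μ] μ[fun ω => s.indicator (fun _ => (1 : ℝ)) (Y ω)|ℱ])
    {A : Set Ω} (hA : MeasurableSet[ℱ] A) :
    ∫ ω in A, X ω ∂μ = ∫ ω in A, Y ω ∂μ := by
  have h := map_restrict_eq hℱ hX hY H hA
  calc ∫ ω in A, X ω ∂μ = ∫ x, x ∂((μ.restrict A).map X) :=
        (integral_map hX.aemeasurable aestronglyMeasurable_id).symm
    _ = ∫ x, x ∂((μ.restrict A).map Y) := by rw [h]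
    _ = ∫ ω in A, Y ω ∂μ := integral_map hY.aemeasurable aestronglyMeasurable_id

lemma integral_sq_eq_of_map_eq {Ω : Type*} {m0 : MeasurableSpace Ω} {μ : Measure Ω}
    {X Y : Ω → ℝ} (hX : Measurable X) (hY : Measurable Y)
    (h : μ.map X = μ.map Y) : ∫ ω, X ω * X ω ∂μ = ∫ ω, Y ω * Y ω ∂μ := by
  calc ∫ ω, X ω * X ω ∂μ = ∫ x, x * x ∂(μ.map X) :=
        (integral_map hX.aemeasurable
          ((measurable_id.mul measurable_id).aestronglyMeasurable)).symm
    _ = ∫ x, x * x ∂(μ.map Y) := by rw [h]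
    _ = ∫ ω, Y ω * Y ω ∂μ := integral_map hY.aemeasurable
        ((measurable_id.mul measurable_id).aestronglyMeasurable)

lemma integrable_simpleFunc_comp {Ω : Type*} {m0 : MeasurableSpace Ω} {μ : Measure Ω}
    [IsFiniteMeasure μ] (ψ : SimpleFunc ℝ ℝ) {X : Ω → ℝ} (hX : Measurable X) :
    Integrable (fun ω => ψ (X ω)) μ := by
  obtain ⟨C, hC⟩ := ψ.exists_forall_norm_le
  exact (integrable_const C).mono' ((ψ.measurable.comp hX).aestronglyMeasurable)
    (Filter.Eventually.of_forall fun ω => by simpa using hC (X ω))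

lemma condexp_simpleFunc_comp_congr {Ω : Type*} {ℱ 𝒢 : MeasurableSpace Ω}
    {m0 : MeasurableSpace Ω} {μ : Measure Ω} [IsFiniteMeasure μ]
    {X : Ω → ℝ} (hX : Measurable X)
    (H : ∀ s : Set ℝ, MeasurableSet s →
      μ[fun ω => s.indicator (fun _ => (1 : ℝ)) (X ω)|ℱ]
        =ᵐ[μ] μ[fun ω => s.indicator (fun _ => (1 : ℝ)) (X ω)|𝒢])
    (ψ : SimpleFunc ℝ ℝ) :
    μ[fun ω => ψ (X ω)|ℱ] =ᵐ[μ] μ[fun ω => ψ (X ω)|𝒢] := by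
  induction ψ using SimpleFunc.induction with
  | const c hs =>
    rename_i s
    have hrw : (fun ω => (SimpleFunc.piecewise s hs (SimpleFunc.const ℝ c)
        (SimpleFunc.const ℝ 0)) (X ω))
        = c • (fun ω => s.indicator (fun _ => (1 : ℝ)) (X ω)) := by
      funext ω
      by_cases h : X ω ∈ s <;>
        simp [SimpleFunc.piecewise_apply, h, Set.indicator]
    rw [hrw]
    calc μ[c • (fun ω => s.indicator (fun _ => (1 : ℝ)) (X ω))|ℱ]
        =ᵐ[μ] c • μ[fun ω => s.indicator (fun _ => (1 : ℝ)) (X ω)|ℱ] := condExp_smul c _ ℱ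
      _ =ᵐ[μ] c • μ[fun ω => s.indicator (fun _ => (1 : ℝ)) (X ω)|𝒢] := by
          filter_upwards [H s hs] with ω h
          simp [h]
      _ =ᵐ[μ] μ[c • (fun ω => s.indicator (fun _ => (1 : ℝ)) (X ω))|𝒢] := (condExp_smul c _ 𝒢).symm
  | add hdisj hf hg =>
    rename_i f g
    have hfi : Integrable (fun ω => f (X ω)) μ := integrable_simpleFunc_comp f hX
    have hgi : Integrable (fun ω => g (X ω)) μ := integrable_simpleFunc_comp g hX
    have hrw : (fun ω => (f + g) (X ω))
        = (fun ω => f (X ω)) + (fun ω => g (X ω)) := rfl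
    rw [hrw]
    calc μ[(fun ω => f (X ω)) + (fun ω => g (X ω))|ℱ]
        =ᵐ[μ] μ[fun ω => f (X ω)|ℱ] + μ[fun ω => g (X ω)|ℱ] := condExp_add hfi hgi ℱ
      _ =ᵐ[μ] μ[fun ω => f (X ω)|𝒢] + μ[fun ω => g (X ω)|𝒢] := hf.add hg
      _ =ᵐ[μ] μ[(fun ω => f (X ω)) + (fun ω => g (X ω))|𝒢] := (condExp_add hfi hgi 𝒢).symm

lemma condexp_congr_sigmaAlgebra {Ω : Type*} {ℱ 𝒢 : MeasurableSpace Ω}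
    {m0 : MeasurableSpace Ω} {μ : Measure Ω} [IsProbabilityMeasure μ]
    (hℱ : ℱ ≤ m0) (h𝒢 : 𝒢 ≤ m0)
    {X : Ω → ℝ} (hX : Measurable X) (hXi : Integrable X μ)
    (H : ∀ s : Set ℝ, MeasurableSet s →
      μ[fun ω => s.indicator (fun _ => (1 : ℝ)) (X ω)|ℱ]
        =ᵐ[μ] μ[fun ω => s.indicator (fun _ => (1 : ℝ)) (X ω)|𝒢]) :
    μ[X|ℱ] =ᵐ[μ] μ[X|𝒢] := by
  have hsep : TopologicalSpace.SeparableSpace (Set.univ : Set ℝ) := by infer_instance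
  set g : ℕ → SimpleFunc Ω ℝ :=
    fun n => SimpleFunc.approxOn X hX Set.univ 0 (Set.mem_univ 0) n with hg_def
  have hkey : ∀ n, μ[fun ω => (g n) ω|ℱ] =ᵐ[μ] μ[fun ω => (g n) ω|𝒢] := by
    intro n
    have : ⇑(g n) = fun ω =>
        (SimpleFunc.nearestPt (fun k => Nat.casesOn k 0
          ((↑) ∘ TopologicalSpace.denseSeq (Set.univ : Set ℝ)) : ℕ → ℝ) n) (X ω) := rfl
    rw [this]
    exact condexp_simpleFunc_comp_congr hX H _
  have hgi : ∀ n, Integrable (⇑(g n)) μ :=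
    fun n => SimpleFunc.integrable_approxOn hX hXi (Set.mem_univ 0) (integrable_const 0) n
  have hL1 : Tendsto (fun n => eLpNorm (fun ω => (g n) ω - X ω) 1 μ) atTop (𝓝 0) := by
    simp only [eLpNorm_one_eq_lintegral_enorm]
    exact SimpleFunc.tendsto_approxOn_L1_enorm hX (Set.mem_univ (0:ℝ))
      (by filter_upwards with ω; simp)
      (by simpa using hXi.2)
  have hbound : ∀ n, eLpNorm (μ[X|ℱ] - μ[X|𝒢]) 1 μ
      ≤ 2 * eLpNorm (fun ω => (g n) ω - X ω) 1 μ := by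
    intro n
    have h1 : μ[X|ℱ] - μ[X|𝒢]
        =ᵐ[μ] (μ[X - ⇑(g n)|ℱ]) + ((μ[⇑(g n)|ℱ] - μ[⇑(g n)|𝒢]) + (μ[⇑(g n) - X|𝒢])) := by
      have e1 : μ[X - ⇑(g n)|ℱ] =ᵐ[μ] μ[X|ℱ] - μ[⇑(g n)|ℱ] := condExp_sub hXi (hgi n) ℱ
      have e2 : μ[⇑(g n) - X|𝒢] =ᵐ[μ] μ[⇑(g n)|𝒢] - μ[X|𝒢] := condExp_sub (hgi n) hXi 𝒢
      filter_upwards [e1, e2] with ω h1 h2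
      simp only [Pi.add_apply, Pi.sub_apply] at *
      rw [h1, h2]; ring
    calc eLpNorm (μ[X|ℱ] - μ[X|𝒢]) 1 μ
        = eLpNorm ((μ[X - ⇑(g n)|ℱ])
            + ((μ[⇑(g n)|ℱ] - μ[⇑(g n)|𝒢]) + (μ[⇑(g n) - X|𝒢]))) 1 μ := eLpNorm_congr_ae h1
      _ ≤ eLpNorm (μ[X - ⇑(g n)|ℱ]) 1 μ
            + eLpNorm ((μ[⇑(g n)|ℱ] - μ[⇑(g n)|𝒢]) + (μ[⇑(g n) - X|𝒢])) 1 μ := by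
          refine eLpNorm_add_le ?_ ?_ le_rfl
          · exact (stronglyMeasurable_condExp.mono hℱ).aestronglyMeasurable
          · exact (((stronglyMeasurable_condExp.mono hℱ).aestronglyMeasurable).sub
              ((stronglyMeasurable_condExp.mono h𝒢).aestronglyMeasurable)).add
              ((stronglyMeasurable_condExp.mono h𝒢).aestronglyMeasurable)
      _ ≤ eLpNorm (μ[X - ⇑(g n)|ℱ]) 1 μ
            + (eLpNorm (μ[⇑(g n)|ℱ] - μ[⇑(g n)|𝒢]) 1 μ + eLpNorm (μ[⇑(g n) - X|𝒢]) 1 μ) := by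
          gcongr
          refine eLpNorm_add_le ?_ ?_ le_rfl
          · exact ((stronglyMeasurable_condExp.mono hℱ).aestronglyMeasurable).sub
              ((stronglyMeasurable_condExp.mono h𝒢).aestronglyMeasurable)
          · exact (stronglyMeasurable_condExp.mono h𝒢).aestronglyMeasurable
      _ = eLpNorm (μ[X - ⇑(g n)|ℱ]) 1 μ + eLpNorm (μ[⇑(g n) - X|𝒢]) 1 μ := by
          have : eLpNorm (μ[⇑(g n)|ℱ] - μ[⇑(g n)|𝒢]) 1 μ = 0 := by
            rw [eLpNorm_eq_zero_iff (((stronglyMeasurable_condExp.mono hℱ).aestronglyMeasurable).sub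
              ((stronglyMeasurable_condExp.mono h𝒢).aestronglyMeasurable)) one_ne_zero]
            filter_upwards [hkey n] with ω h
            simp only [Pi.sub_apply, Pi.zero_apply]
            rw [h]; ring
          rw [this]; ring
      _ ≤ eLpNorm (X - ⇑(g n)) 1 μ + eLpNorm (⇑(g n) - X) 1 μ := by
          gcongr <;> exact eLpNorm_one_condExp_le_eLpNorm _
      _ = 2 * eLpNorm (fun ω => (g n) ω - X ω) 1 μ := by
          rw [eLpNorm_sub_comm, two_mul]
          rfl
  have hzero : eLpNorm (μ[X|ℱ] - μ[X|𝒢]) 1 μ = 0 := by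
    have h2 : Tendsto (fun n => 2 * eLpNorm (fun ω => (g n) ω - X ω) 1 μ) atTop (𝓝 0) := by
      have h := ENNReal.Tendsto.const_mul (a := 2) hL1 (Or.inr ENNReal.ofNat_ne_top)
      rw [mul_zero] at h
      exact h
    exact le_antisymm (ge_of_tendsto' h2 hbound) zero_le
  have := (eLpNorm_eq_zero_iff (((stronglyMeasurable_condExp.mono hℱ).aestronglyMeasurable).sub
      ((stronglyMeasurable_condExp.mono h𝒢).aestronglyMeasurable)) one_ne_zero).mp hzero
  filter_upwards [this] with ω h
  have : (μ[X|ℱ]) ω - (μ[X|𝒢]) ω = 0 := h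
  linarith

lemma sq_setIntegral_le {Ω : Type*} {m0 : MeasurableSpace Ω} {μ : Measure Ω} [IsFiniteMeasure μ]
    {g : Ω → ℝ} (hg : MemLp g 2 μ) (A : Set Ω) :
    (∫ ω in A, g ω ∂μ) ^ 2 ≤ (μ A).toReal * ∫ ω in A, g ω * g ω ∂μ := by
  set ν := μ.restrict A with hν
  have hgr : MemLp g 2 ν := hg.restrict A
  have hgi : Integrable g ν := hgr.integrable one_le_two
  have hggi : Integrable (fun ω => g ω * g ω) ν := integrable_mul_L2 hgr hgr
  set c := ∫ ω, g ω ∂ν with hc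
  set M := (μ A).toReal with hM
  have hMν : (ν Set.univ).toReal = M := by rw [hν, Measure.restrict_apply_univ]
  have key : (0:ℝ) ≤ ∫ ω, (M * g ω - c) ^ 2 ∂ν := integral_nonneg fun ω => sq_nonneg _
  have hexp : ∫ ω, (M * g ω - c) ^ 2 ∂ν
      = M ^ 2 * (∫ ω, g ω * g ω ∂ν) - 2 * M * c * c + c ^ 2 * M := by
    have h1 : (fun ω => (M * g ω - c) ^ 2)
        = fun ω => (M ^ 2 * (g ω * g ω) - (2 * M * c) * g ω) + c ^ 2 := by
      funext ω; ring
    have i3 : Integrable (fun ω => M ^ 2 * (g ω * g ω)) ν := hggi.const_mul _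
    have i4 : Integrable (fun ω => 2 * M * c * g ω) ν := hgi.const_mul _
    have i1 : Integrable (fun ω => M ^ 2 * (g ω * g ω) - 2 * M * c * g ω) ν := i3.sub i4
    have i2 : Integrable (fun _ : Ω => c ^ 2) ν := integrable_const _
    rw [h1, integral_add i1 i2, integral_sub i3 i4, integral_const_mul, integral_const_mul,
      integral_const, smul_eq_mul, measureReal_def, hMν, ← hc]
    ring
  rw [hexp] at key
  rcases eq_or_lt_of_le (ENNReal.toReal_nonneg : (0:ℝ) ≤ M) with hM0 | hM0
  · have hA0 : μ A = 0 := by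
      rcases (ENNReal.toReal_eq_zero_iff _).mp hM0.symm with h | h
      · exact h
      · exact absurd h (measure_ne_top μ A)
    have hν0 : ν = 0 := by rw [hν, Measure.restrict_eq_zero]; exact hA0
    have hc0 : c = 0 := by rw [hc, hν0]; simp
    rw [hc0, hM, ← hM0]
    simp
  · nlinarith [key]

lemma condexp_same_of_indC {Ω : Type*} {ℱ : MeasurableSpace Ω} {m0 : MeasurableSpace Ω}
    {μ : Measure Ω} [IsProbabilityMeasure μ] (hℱ : ℱ ≤ m0) {X Y : Ω → ℝ}
    (hXi : Integrable X μ) (hYi : Integrable Y μ)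
    (hset : ∀ (A : Set Ω), MeasurableSet[ℱ] A → ∫ ω in A, X ω ∂μ = ∫ ω in A, Y ω ∂μ) :
    μ[X|ℱ] =ᵐ[μ] μ[Y|ℱ] := by
  have h := ae_eq_condExp_of_forall_setIntegral_eq hℱ hXi
    (fun s _ _ => integrable_condExp.integrableOn)
    (fun s hs _ => by
      rw [setIntegral_condExp hℱ hYi hs]
      exact (hset s hs).symm)
    stronglyMeasurable_condExp.aestronglyMeasurable
  exact h.symm

lemma integral_sum_mul_sum {Ω : Type*} {m0 : MeasurableSpace Ω} {μ : Measure Ω}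
    [IsFiniteMeasure μ] (I : Finset ℕ) (u v : ℕ → Ω → ℝ)
    (hu : ∀ i ∈ I, MemLp (u i) 2 μ) (hv : ∀ j ∈ I, MemLp (v j) 2 μ) :
    ∫ ω, (∑ i ∈ I, u i ω) * (∑ j ∈ I, v j ω) ∂μ
      = ∑ i ∈ I, ∑ j ∈ I, ∫ ω, u i ω * v j ω ∂μ := by
  have h1 : ∀ ω, (∑ i ∈ I, u i ω) * (∑ j ∈ I, v j ω) = ∑ i ∈ I, ∑ j ∈ I, u i ω * v j ω := by
    intro ω; rw [Finset.sum_mul_sum]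
  simp_rw [h1]
  rw [integral_finset_sum _ (fun i hi =>
    integrable_finset_sum _ (fun j hj => integrable_mul_L2 (hu i hi) (hv j hj)))]
  exact Finset.sum_congr rfl fun i hi =>
    integral_finset_sum _ (fun j hj => integrable_mul_L2 (hu i hi) (hv j hj))

end TangentDecouplingAux

open TangentDecouplingAux

/-- Paley-Zygmund-type inequality via decoupling: if `S_n = ∑ d i ≥ 0` a.s. and `E S_n > 0`,
then for `0 < θ < 1`,
`P(S_n > θ E S_n) ≥ (1-θ)^2 (E S_n)^2 / (2 E (S_n')^2 - (E S_n)^2)`. -/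
theorem tangent_decoupling_paley_zygmund
    {Ω : Type*} (𝒢 : MeasurableSpace Ω) {m0 : MeasurableSpace Ω} (μ : Measure Ω) [IsProbabilityMeasure μ]
    (n : ℕ) (F : ℕ → MeasurableSpace Ω) (hF_mono : Monotone F) (hF_le : ∀ i, F i ≤ m0)
    (h𝒢 : 𝒢 ≤ m0)
    (d e : ℕ → Ω → ℝ)
    (hd_meas : ∀ i, Measurable (d i)) (he_meas : ∀ i, Measurable (e i))
    (hd_adapted : ∀ i, Measurable[F i] (d i)) (he_adapted : ∀ i, Measurable[F i] (e i))
    (hd_L2 : ∀ i, MemLp (d i) 2 μ) (he_L2 : ∀ i, MemLp (e i) 2 μ)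
    -- conditional independence of the `e i` given `𝒢`
    (hCI : ∀ (S : Finset ℕ) (s : ℕ → Set ℝ), (∀ i, MeasurableSet (s i)) →
      μ[fun ω => ∏ i ∈ S, (s i).indicator (fun _ => (1 : ℝ)) (e i ω)|𝒢]
        =ᵐ[μ] fun ω => ∏ i ∈ S,
          (μ[fun ω' => (s i).indicator (fun _ => (1 : ℝ)) (e i ω')|𝒢]) ω)
    -- `L(e i | F (i-1)) = L(e i | 𝒢)`
    (hcondLaw : ∀ i, 1 ≤ i → ∀ s : Set ℝ, MeasurableSet s →
      μ[fun ω => s.indicator (fun _ => (1 : ℝ)) (e i ω)|F (i - 1)]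
        =ᵐ[μ] μ[fun ω => s.indicator (fun _ => (1 : ℝ)) (e i ω)|𝒢])
    -- tangency: `L(d i | F (i-1)) = L(e i | F (i-1))`
    (htangent : ∀ i, 1 ≤ i → ∀ s : Set ℝ, MeasurableSet s →
      μ[fun ω => s.indicator (fun _ => (1 : ℝ)) (d i ω)|F (i - 1)]
        =ᵐ[μ] μ[fun ω => s.indicator (fun _ => (1 : ℝ)) (e i ω)|F (i - 1)])
    (hS_nonneg : 0 ≤ᵐ[μ] fun ω => ∑ i ∈ Finset.Icc 1 n, d i ω)
    (hS_pos : 0 < ∫ ω, ∑ i ∈ Finset.Icc 1 n, d i ω ∂μ)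
    (θ : ℝ) (hθ0 : 0 < θ) (hθ1 : θ < 1) :
    (1 - θ) ^ 2 * (∫ ω, ∑ i ∈ Finset.Icc 1 n, d i ω ∂μ) ^ 2
        / (2 * ∫ ω, (∑ i ∈ Finset.Icc 1 n, e i ω) ^ 2 ∂μ
            - (∫ ω, ∑ i ∈ Finset.Icc 1 n, d i ω ∂μ) ^ 2)
      ≤ (μ {ω | θ * ∫ ω', ∑ i ∈ Finset.Icc 1 n, d i ω' ∂μ
            < ∑ i ∈ Finset.Icc 1 n, d i ω}).toReal := by
  classical
  letI : MeasurableSpace Ω := m0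
  have hdm : ∀ i, Measurable[m0] (d i) := fun i => hd_meas i
  have hem : ∀ i, Measurable[m0] (e i) := fun i => he_meas i
  have hdi : ∀ i, Integrable (d i) μ := fun i => (hd_L2 i).integrable one_le_two
  have hei : ∀ i, Integrable (e i) μ := fun i => (he_L2 i).integrable one_le_two
  set I : Finset ℕ := Finset.Icc 1 n with hI_def
  -- membership facts
  have hmem : ∀ i ∈ I, 1 ≤ i := fun i hi => (Finset.mem_Icc.mp hi).1
  have hbe : ∀ i, 1 ≤ i → μ[e i|F (i - 1)] =ᵐ[μ] μ[e i|𝒢] := by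
    intro i hi
    exact condexp_congr_sigmaAlgebra (hF_le (i - 1)) h𝒢 (hem i) (hei i) (hcondLaw i hi)
  -- set integral equality for tangency
  have hsetDE : ∀ i, 1 ≤ i → ∀ A : Set Ω, MeasurableSet[F (i - 1)] A →
      ∫ ω in A, d i ω ∂μ = ∫ ω in A, e i ω ∂μ := fun i hi A hA =>
    setIntegral_eq_of_indC (hF_le (i - 1)) (hdm i) (hem i) (htangent i hi) hA
  have htanE : ∀ i, 1 ≤ i → μ[d i|F (i - 1)] =ᵐ[μ] μ[e i|𝒢] := by
    intro i hi
    exact (condexp_same_of_indC (hF_le (i - 1)) (hdi i) (hei i) (hsetDE i hi)).trans (hbe i hi)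
  have hbL2 : ∀ i, MemLp (μ[e i|𝒢]) 2 μ := fun i => memℒp_two_condexp h𝒢 (he_L2 i)
  have hK4 : ∀ i, 1 ≤ i → ∫ ω, d i ω * d i ω ∂μ = ∫ ω, e i ω * e i ω ∂μ := by
    intro i hi
    have h := map_restrict_eq (hF_le (i - 1)) (hdm i) (hem i) (htangent i hi)
      (@MeasurableSet.univ Ω (F (i - 1)))
    rw [Measure.restrict_univ] at h
    exact integral_sq_eq_of_map_eq (hdm i) (hem i) h
  have hK5 : ∀ i, 1 ≤ i → ∫ ω, d i ω ∂μ = ∫ ω, e i ω ∂μ := by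
    intro i hi
    have h := hsetDE i hi Set.univ (@MeasurableSet.univ Ω (F (i - 1)))
    rwa [setIntegral_univ, setIntegral_univ] at h
  have hK1 : ∀ i, 1 ≤ i → ∀ j, i < j →
      ∫ ω, d i ω * d j ω ∂μ = ∫ ω, d i ω * (μ[e j|𝒢]) ω ∂μ := by
    intro i hi j hij
    have hj1 : 1 ≤ j := le_trans hi hij.le
    have hsm : StronglyMeasurable[F (j - 1)] (d i) :=
      ((hd_adapted i).stronglyMeasurable).mono (hF_mono (Nat.le_sub_one_of_lt hij))
    have hint : Integrable (d i * d j) μ := integrable_mul_L2 (hd_L2 i) (hd_L2 j)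
    have hpull : μ[d i * d j|F (j - 1)] =ᵐ[μ] d i * μ[d j|F (j - 1)] :=
      condExp_mul_of_stronglyMeasurable_left hsm hint (hdi j)
    calc ∫ ω, d i ω * d j ω ∂μ
        = ∫ ω, (μ[d i * d j|F (j - 1)]) ω ∂μ := (integral_condExp (hF_le _)).symm
      _ = ∫ ω, (d i * μ[d j|F (j - 1)]) ω ∂μ := integral_congr_ae hpull
      _ = ∫ ω, d i ω * (μ[e j|𝒢]) ω ∂μ := by
          refine integral_congr_ae ?_
          filter_upwards [htanE j hj1] with ω h
          simp only [Pi.mul_apply]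
          rw [h]
  have hK1e : ∀ i, 1 ≤ i → ∀ j, i < j →
      ∫ ω, e i ω * e j ω ∂μ = ∫ ω, e i ω * (μ[e j|𝒢]) ω ∂μ := by
    intro i hi j hij
    have hj1 : 1 ≤ j := le_trans hi hij.le
    have hsm : StronglyMeasurable[F (j - 1)] (e i) :=
      ((he_adapted i).stronglyMeasurable).mono (hF_mono (Nat.le_sub_one_of_lt hij))
    have hint : Integrable (e i * e j) μ := integrable_mul_L2 (he_L2 i) (he_L2 j)
    have hpull : μ[e i * e j|F (j - 1)] =ᵐ[μ] e i * μ[e j|F (j - 1)] :=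
      condExp_mul_of_stronglyMeasurable_left hsm hint (hei j)
    calc ∫ ω, e i ω * e j ω ∂μ
        = ∫ ω, (μ[e i * e j|F (j - 1)]) ω ∂μ := (integral_condExp (hF_le _)).symm
      _ = ∫ ω, (e i * μ[e j|F (j - 1)]) ω ∂μ := integral_congr_ae hpull
      _ = ∫ ω, e i ω * (μ[e j|𝒢]) ω ∂μ := by
          refine integral_congr_ae ?_
          filter_upwards [hbe j hj1] with ω h
          simp only [Pi.mul_apply]
          rw [h]
  have hK3 : ∀ i, 1 ≤ i → ∀ j, 1 ≤ j → j ≤ i →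
      ∫ ω, d i ω * (μ[e j|𝒢]) ω ∂μ = ∫ ω, (μ[e i|𝒢]) ω * (μ[e j|𝒢]) ω ∂μ := by
    intro i hi j hj1 hji
    have hsm : StronglyMeasurable[F (i - 1)] (μ[e j|F (j - 1)]) :=
      stronglyMeasurable_condExp.mono (hF_mono (Nat.sub_le_sub_right hji 1))
    have hbjL2 : MemLp (μ[e j|F (j - 1)]) 2 μ := memℒp_two_condexp (hF_le _) (he_L2 j)
    have hint2 : Integrable (μ[e j|F (j - 1)] * d i) μ :=
      integrable_mul_L2 hbjL2 (hd_L2 i)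
    have hpull : μ[μ[e j|F (j - 1)] * d i|F (i - 1)]
        =ᵐ[μ] μ[e j|F (j - 1)] * μ[d i|F (i - 1)] :=
      condExp_mul_of_stronglyMeasurable_left hsm hint2 (hdi i)
    calc ∫ ω, d i ω * (μ[e j|𝒢]) ω ∂μ
        = ∫ ω, (μ[e j|F (j - 1)] * d i) ω ∂μ := by
          refine integral_congr_ae ?_
          filter_upwards [hbe j hj1] with ω h
          simp only [Pi.mul_apply]
          rw [h]; ring
      _ = ∫ ω, (μ[μ[e j|F (j - 1)] * d i|F (i - 1)]) ω ∂μ := (integral_condExp (hF_le _)).symm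
      _ = ∫ ω, (μ[e j|F (j - 1)] * μ[d i|F (i - 1)]) ω ∂μ := integral_congr_ae hpull
      _ = ∫ ω, (μ[e i|𝒢]) ω * (μ[e j|𝒢]) ω ∂μ := by
          refine integral_congr_ae ?_
          filter_upwards [hbe j hj1, htanE i hi] with ω h1 h2
          simp only [Pi.mul_apply]
          rw [h1, h2]; ring
  have hK6 : ∀ i j,
      ∫ ω, e i ω * (μ[e j|𝒢]) ω ∂μ = ∫ ω, (μ[e i|𝒢]) ω * (μ[e j|𝒢]) ω ∂μ := by
    intro i j
    have hint : Integrable (μ[e j|𝒢] * e i) μ := integrable_mul_L2 (hbL2 j) (he_L2 i)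
    have hpull : μ[μ[e j|𝒢] * e i|𝒢] =ᵐ[μ] μ[e j|𝒢] * μ[e i|𝒢] :=
      condExp_mul_of_stronglyMeasurable_left stronglyMeasurable_condExp hint (hei i)
    calc ∫ ω, e i ω * (μ[e j|𝒢]) ω ∂μ = ∫ ω, (μ[e j|𝒢] * e i) ω ∂μ := by
          refine integral_congr_ae (Filter.Eventually.of_forall fun ω => ?_)
          simp only [Pi.mul_apply]; ring
      _ = ∫ ω, (μ[μ[e j|𝒢] * e i|𝒢]) ω ∂μ := (integral_condExp h𝒢).symm
      _ = ∫ ω, (μ[e j|𝒢] * μ[e i|𝒢]) ω ∂μ := integral_congr_ae hpull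
      _ = ∫ ω, (μ[e i|𝒢]) ω * (μ[e j|𝒢]) ω ∂μ := by
          refine integral_congr_ae (Filter.Eventually.of_forall fun ω => ?_)
          simp only [Pi.mul_apply]; ring
  -- the double sums
  set P : ℕ → ℕ → ℝ := fun i j => ∫ ω, d i ω * d j ω ∂μ with hP_def
  set Q : ℕ → ℕ → ℝ := fun i j => ∫ ω, d i ω * (μ[e j|𝒢]) ω ∂μ with hQ_def
  set R : ℕ → ℕ → ℝ := fun i j => ∫ ω, e i ω * e j ω ∂μ with hR_def
  set T : ℕ → ℕ → ℝ := fun i j => ∫ ω, (μ[e i|𝒢]) ω * (μ[e j|𝒢]) ω ∂μ with hT_def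
  have hPsymm : ∀ i j, P i j = P j i := by
    intro i j
    refine integral_congr_ae (Filter.Eventually.of_forall fun ω => ?_)
    ring
  have hRsymm : ∀ i j, R i j = R j i := by
    intro i j
    refine integral_congr_ae (Filter.Eventually.of_forall fun ω => ?_)
    ring
  have hTsymm : ∀ i j, T i j = T j i := by
    intro i j
    refine integral_congr_ae (Filter.Eventually.of_forall fun ω => ?_)
    ring
  have hpair : ∀ i ∈ I, ∀ j ∈ I,
      (P i j - 2 * Q i j + 2 * T i j - R i j) + (P j i - 2 * Q j i + 2 * T j i - R j i) = 0 := by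
    intro i hiI j hjI
    have hi1 := hmem i hiI
    have hj1 := hmem j hjI
    rcases lt_trichotomy i j with h | h | h
    · have e1 : P i j = Q i j := hK1 i hi1 j h
      have e2 : Q j i = T j i := hK3 j hj1 i hi1 h.le
      have e3 : P j i = P i j := (hPsymm i j).symm
      have e4 : R j i = R i j := hRsymm j i
      have e5 : R i j = T i j := (hK1e i hi1 j h).trans (hK6 i j)
      have e6 : T j i = T i j := hTsymm j i
      linarith
    · subst h
      have e1 : P i i = R i i := hK4 i hi1
      have e2 : Q i i = T i i := hK3 i hi1 i hi1 le_rfl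
      linarith
    · have e1 : P j i = Q j i := hK1 j hj1 i h
      have e2 : Q i j = T i j := hK3 i hi1 j hj1 h.le
      have e3 : P i j = P j i := hPsymm i j
      have e4 : R i j = R j i := hRsymm i j
      have e5 : R j i = T j i := (hK1e j hj1 i h).trans (hK6 j i)
      have e6 : T i j = T j i := hTsymm i j
      linarith
  have hsum0 : ∑ i ∈ I, ∑ j ∈ I, (P i j - 2 * Q i j + 2 * T i j - R i j) = 0 := by
    have h2 : ∑ i ∈ I, ∑ j ∈ I, ((P i j - 2 * Q i j + 2 * T i j - R i j)
        + (P j i - 2 * Q j i + 2 * T j i - R j i)) = 0 :=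
      Finset.sum_eq_zero fun i hi => Finset.sum_eq_zero fun j hj => hpair i hi j hj
    have h3 : ∑ i ∈ I, ∑ j ∈ I, ((P i j - 2 * Q i j + 2 * T i j - R i j)
        + (P j i - 2 * Q j i + 2 * T j i - R j i))
        = (∑ i ∈ I, ∑ j ∈ I, (P i j - 2 * Q i j + 2 * T i j - R i j))
          + (∑ i ∈ I, ∑ j ∈ I, (P j i - 2 * Q j i + 2 * T j i - R j i)) := by
      rw [← Finset.sum_add_distrib]
      exact Finset.sum_congr rfl fun i _ => Finset.sum_add_distrib
    have h4 : ∑ i ∈ I, ∑ j ∈ I, (P j i - 2 * Q j i + 2 * T j i - R j i)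
        = ∑ i ∈ I, ∑ j ∈ I, (P i j - 2 * Q i j + 2 * T i j - R i j) := Finset.sum_comm
    rw [h3, h4] at h2
    linarith
  -- expansions
  set S : Ω → ℝ := fun ω => ∑ i ∈ I, d i ω with hS_def
  set S' : Ω → ℝ := fun ω => ∑ i ∈ I, e i ω with hS'_def
  set B : Ω → ℝ := fun ω => ∑ i ∈ I, (μ[e i|𝒢]) ω with hB_def
  have hSL2 : MemLp S 2 μ := memLp_finset_sum I (fun i _ => hd_L2 i)
  have hS'L2 : MemLp S' 2 μ := memLp_finset_sum I (fun i _ => he_L2 i)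
  have hBL2 : MemLp B 2 μ := memLp_finset_sum I (fun i _ => hbL2 i)
  have hSi : Integrable S μ := hSL2.integrable one_le_two
  have hBi : Integrable B μ := hBL2.integrable one_le_two
  have hSS : ∫ ω, S ω * S ω ∂μ = ∑ i ∈ I, ∑ j ∈ I, P i j :=
    integral_sum_mul_sum I d d (fun i _ => hd_L2 i) (fun j _ => hd_L2 j)
  have hSB : ∫ ω, S ω * B ω ∂μ = ∑ i ∈ I, ∑ j ∈ I, Q i j :=
    integral_sum_mul_sum I d (fun i => μ[e i|𝒢]) (fun i _ => hd_L2 i) (fun j _ => hbL2 j)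
  have hBB : ∫ ω, B ω * B ω ∂μ = ∑ i ∈ I, ∑ j ∈ I, T i j :=
    integral_sum_mul_sum I (fun i => μ[e i|𝒢]) (fun i => μ[e i|𝒢])
      (fun i _ => hbL2 i) (fun j _ => hbL2 j)
  have hS'S' : ∫ ω, S' ω * S' ω ∂μ = ∑ i ∈ I, ∑ j ∈ I, R i j :=
    integral_sum_mul_sum I e e (fun i _ => he_L2 i) (fun j _ => he_L2 j)
  have hsplit : ∑ i ∈ I, ∑ j ∈ I, (P i j - 2 * Q i j + 2 * T i j - R i j)
      = (∑ i ∈ I, ∑ j ∈ I, P i j) - 2 * (∑ i ∈ I, ∑ j ∈ I, Q i j)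
        + 2 * (∑ i ∈ I, ∑ j ∈ I, T i j) - (∑ i ∈ I, ∑ j ∈ I, R i j) := by
    simp only [Finset.sum_sub_distrib, Finset.sum_add_distrib, ← Finset.mul_sum]
  have hiden : ∫ ω, S ω * S ω ∂μ - 2 * ∫ ω, S ω * B ω ∂μ + 2 * ∫ ω, B ω * B ω ∂μ
      - ∫ ω, S' ω * S' ω ∂μ = 0 := by
    rw [hSS, hSB, hBB, hS'S', ← hsplit]
    exact hsum0
  -- means
  have hmeanB : ∫ ω, B ω ∂μ = ∫ ω, S ω ∂μ := by
    rw [hB_def, hS_def]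
    rw [integral_finset_sum I (fun i _ => integrable_condExp),
      integral_finset_sum I (fun i _ => hdi i)]
    exact Finset.sum_congr rfl fun i hi =>
      (integral_condExp h𝒢).trans (hK5 i (hmem i hi)).symm
  set a : ℝ := ∫ ω, S ω ∂μ with ha_def
  have ha : 0 < a := hS_pos
  -- second moment bound via decoupling
  have hvar : ∀ (g : Ω → ℝ), MemLp g 2 μ → (∫ ω, g ω ∂μ) ^ 2 ≤ ∫ ω, g ω * g ω ∂μ := by
    intro g hg
    have h := sq_setIntegral_le hg Set.univ
    rwa [setIntegral_univ, setIntegral_univ, measure_univ, ENNReal.toReal_one, one_mul] at h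
  have hU : MemLp (fun ω => S ω - 2 * B ω) 2 μ := hSL2.sub (hBL2.const_mul 2)
  have hUmean : ∫ ω, (S ω - 2 * B ω) ∂μ = -a := by
    rw [integral_sub hSi (hBi.const_mul 2), integral_const_mul, hmeanB, ← ha_def]
    ring
  have hUsq : ∫ ω, (S ω - 2 * B ω) * (S ω - 2 * B ω) ∂μ
      = 2 * ∫ ω, S' ω * S' ω ∂μ - ∫ ω, S ω * S ω ∂μ := by
    have h1 : (fun ω => (S ω - 2 * B ω) * (S ω - 2 * B ω))
        = fun ω => (S ω * S ω - 4 * (S ω * B ω)) + 4 * (B ω * B ω) := by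
      funext ω; ring
    have iSS : Integrable (fun ω => S ω * S ω) μ := integrable_mul_L2 hSL2 hSL2
    have iSB : Integrable (fun ω => S ω * B ω) μ := integrable_mul_L2 hSL2 hBL2
    have iBB : Integrable (fun ω => B ω * B ω) μ := integrable_mul_L2 hBL2 hBL2
    have i4 : Integrable (fun ω => 4 * (S ω * B ω)) μ := iSB.const_mul _
    have i5 : Integrable (fun ω => S ω * S ω - 4 * (S ω * B ω)) μ := iSS.sub i4
    have i6 : Integrable (fun ω => 4 * (B ω * B ω)) μ := iBB.const_mul _
    rw [h1, integral_add i5 i6, integral_sub iSS i4, integral_const_mul, integral_const_mul]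
    linarith [hiden]
  have hD : ∫ ω, S ω * S ω ∂μ ≤ 2 * ∫ ω, S' ω * S' ω ∂μ - a ^ 2 := by
    have h := hvar _ hU
    rw [hUmean, hUsq] at h
    nlinarith [h]
  have hvarS : a ^ 2 ≤ ∫ ω, S ω * S ω ∂μ := by
    have h := hvar S hSL2
    rwa [← ha_def] at h
  -- Paley–Zygmund
  set A : Set Ω := {ω | θ * a < S ω} with hA_def
  have hAmeas : MeasurableSet[m0] A := by
    have hSm : Measurable[m0] S := Finset.measurable_sum I (fun i _ => hdm i)
    exact measurableSet_lt measurable_const hSm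
  have hcompl : ∫ ω in Aᶜ, S ω ∂μ ≤ θ * a := by
    have h1 : ∫ ω in Aᶜ, S ω ∂μ ≤ ∫ ω in Aᶜ, θ * a ∂μ := by
      refine setIntegral_mono_on hSi.integrableOn (integrable_const _).integrableOn
        hAmeas.compl (fun ω hω => ?_)
      exact le_of_not_gt hω
    have h2 : ∫ ω in Aᶜ, θ * a ∂μ = (μ Aᶜ).toReal * (θ * a) := by
      rw [setIntegral_const, smul_eq_mul, measureReal_def]
    have h3 : (μ Aᶜ).toReal ≤ 1 := by
      have h := ENNReal.toReal_mono (by simp) (prob_le_one (μ := μ) (s := Aᶜ))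
      simpa using h
    have hθa : 0 ≤ θ * a := le_of_lt (mul_pos hθ0 ha)
    nlinarith [h1, h2, h3, ENNReal.toReal_nonneg (a := μ Aᶜ)]
  have hsplit2 : ∫ ω in A, S ω ∂μ + ∫ ω in Aᶜ, S ω ∂μ = a := integral_add_compl hAmeas hSi
  have h1 : (1 - θ) * a ≤ ∫ ω in A, S ω ∂μ := by linarith
  have h2 : (∫ ω in A, S ω ∂μ) ^ 2 ≤ (μ A).toReal * ∫ ω in A, S ω * S ω ∂μ :=
    sq_setIntegral_le hSL2 A
  have h3 : ∫ ω in A, S ω * S ω ∂μ ≤ ∫ ω, S ω * S ω ∂μ :=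
    setIntegral_le_integral (integrable_mul_L2 hSL2 hSL2)
      (Filter.Eventually.of_forall fun ω => mul_self_nonneg _)
  have hma : 0 ≤ (μ A).toReal := ENNReal.toReal_nonneg
  have hchain : ((1 - θ) * a) ^ 2 ≤ (μ A).toReal * (2 * ∫ ω, S' ω * S' ω ∂μ - a ^ 2) := by
    have hstep1 : ((1 - θ) * a) ^ 2 ≤ (∫ ω in A, S ω ∂μ) ^ 2 := by
      have h0 : 0 ≤ (1 - θ) * a := mul_nonneg (by linarith) ha.le
      exact pow_le_pow_left₀ h0 h1 2
    have hstep2 : (μ A).toReal * ∫ ω in A, S ω * S ω ∂μ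
        ≤ (μ A).toReal * (2 * ∫ ω, S' ω * S' ω ∂μ - a ^ 2) := by
      refine mul_le_mul_of_nonneg_left (le_trans h3 hD) hma
    linarith
  have hDpos : 0 < 2 * ∫ ω, S' ω * S' ω ∂μ - a ^ 2 :=
    lt_of_lt_of_le (pow_pos ha 2) (le_trans hvarS hD)
  -- convert goal
  have hgoal_sq : ∫ ω, (∑ i ∈ I, e i ω) ^ 2 ∂μ = ∫ ω, S' ω * S' ω ∂μ := by
    refine integral_congr_ae (Filter.Eventually.of_forall fun ω => ?_)
    exact pow_two _
  show (1 - θ) ^ 2 * a ^ 2 / (2 * ∫ ω, (∑ i ∈ I, e i ω) ^ 2 ∂μ - a ^ 2) ≤ (μ A).toReal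
  rw [hgoal_sq, div_le_iff₀ hDpos]
  calc (1 - θ) ^ 2 * a ^ 2 = ((1 - θ) * a) ^ 2 := by ring
    _ ≤ (μ A).toReal * (2 * ∫ ω, S' ω * S' ω ∂μ - a ^ 2) := hchain
end
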